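/- arXiv:2309.07685 — 8 statements merged into one kernel-verified Lean document; each statement's English description precedes it below -/
import Mathlib

section
/- Let p > 3 be a prime with p ≡ 2 (mod 3), and let a be an integer with p ∤ a. Then V_p(x² + a/x) = (2p − 1)/3. -/
open Finset

section Aux

variable {p : ℕ} [Fact p.Prime]

lemma cube_inj (hp2 : p % 3 = 2) : Function.Injective (fun x : ZMod p => x ^ 3) := by
  intro x y h
  simp only at h
  by_cases hy : y = 0
  · subst hy
    simpa [pow_eq_zero_iff] using h
  by_cases hx : x = 0
  · subst hx
    simp [eq_comm, pow_eq_zero_iff] at h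
    exact h.symm ▸ rfl
  have hy3 : y ^ 3 ≠ 0 := pow_ne_zero _ hy
  have ht3 : (x * y⁻¹) ^ 3 = 1 := by
    rw [mul_pow, h, inv_pow]
    field_simp
  have htne : x * y⁻¹ ≠ 0 := mul_ne_zero hx (inv_ne_zero hy)
  have hfer : (x * y⁻¹) ^ (p - 1) = 1 := ZMod.pow_card_sub_one_eq_one htne
  obtain ⟨k, hk⟩ : ∃ k, p - 1 = 3 * k + 1 := ⟨p / 3, by omega⟩
  have : x * y⁻¹ = 1 := by
    calc x * y⁻¹ = ((x * y⁻¹) ^ 3) ^ k * (x * y⁻¹) := by rw [ht3]; ring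
    _ = (x * y⁻¹) ^ (p - 1) := by rw [hk]; ring
    _ = 1 := hfer
  field_simp at this
  exact this

lemma cube_bij (hp2 : p % 3 = 2) : Function.Bijective (fun x : ZMod p => x ^ 3) :=
  (Finite.injective_iff_bijective).mp (cube_inj hp2)

/-- fiber of b : roots of X^3 - bX + α -/
def rs (α b : ZMod p) : Finset (ZMod p) :=
  univ.filter (fun x => x ^ 3 + α = b * x)

lemma mem_rs {α b x : ZMod p} : x ∈ rs α b ↔ x ^ 3 + α = b * x := by
  simp [rs]

lemma card_ne_zero_filter : (univ.filter (fun x : ZMod p => ¬ x = 0)).card = p - 1 := by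
  have : (univ.filter (fun x : ZMod p => ¬ x = 0)) = univ.erase 0 := by
    ext x; simp [Finset.mem_erase, and_comm]
  rw [this, Finset.card_erase_of_mem (mem_univ _), Finset.card_univ, ZMod.card]

lemma sum_card_rs (α : ZMod p) (hα : α ≠ 0) : ∑ b : ZMod p, (rs α b).card = p - 1 := by
  have key : ∀ x : ZMod p,
      (univ.filter fun b : ZMod p => x ^ 3 + α = b * x).card = if x = 0 then 0 else 1 := by
    intro x
    split_ifs with hx
    · subst hx
      rw [Finset.card_eq_zero, Finset.filter_eq_empty_iff]
      intro b _
      simpa using hα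
    · rw [Finset.card_eq_one]
      refine ⟨(x ^ 3 + α) * x⁻¹, ?_⟩
      ext b
      simp only [mem_filter, mem_univ, true_and, Finset.mem_singleton]
      constructor
      · intro h
        field_simp [h]
        exact h.symm
      · rintro rfl
        field_simp
  calc ∑ b : ZMod p, (rs α b).card
      = ∑ b : ZMod p, ∑ x : ZMod p, if x ^ 3 + α = b * x then 1 else 0 := by
        simp only [rs, Finset.card_filter]
    _ = ∑ x : ZMod p, ∑ b : ZMod p, if x ^ 3 + α = b * x then 1 else 0 := Finset.sum_comm
    _ = ∑ x : ZMod p, (univ.filter fun b : ZMod p => x ^ 3 + α = b * x).card :=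
        Finset.sum_congr rfl (fun x _ => (Finset.card_filter _ _).symm)
    _ = ∑ x : ZMod p, if x = 0 then 0 else 1 := by
        exact Finset.sum_congr rfl (fun x _ => key x)
    _ = (univ.filter (fun x : ZMod p => ¬ x = 0)).card := by
        rw [Finset.card_filter]
        exact Finset.sum_congr rfl (fun x _ => by by_cases hx : x = 0 <;> simp [hx])
    _ = p - 1 := card_ne_zero_filter

lemma card_rs_le_three (α b : ZMod p) : (rs α b).card ≤ 3 := by
  by_cases h : ∃ x ∈ rs α b, ∃ y ∈ rs α b, x ≠ y
  · obtain ⟨x, hx, y, hy, hxy⟩ := h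
    rw [mem_rs] at hx hy
    have hsub : rs α b ⊆ {x, y, -x - y} := by
      intro z hz
      rw [mem_rs] at hz
      simp only [Finset.mem_insert, Finset.mem_singleton]
      by_contra hc
      push_neg at hc
      obtain ⟨hzx, hzy, hzs⟩ := hc
      have e1 : x ^ 2 + x * z + z ^ 2 = b := by
        have h0 : (x - z) * ((x ^ 2 + x * z + z ^ 2) - b) = 0 := by
          linear_combination hx - hz
        rcases mul_eq_zero.mp h0 with h' | h'
        · exact absurd (sub_eq_zero.mp h').symm hzx
        · exact sub_eq_zero.mp h'
      have e2 : y ^ 2 + y * z + z ^ 2 = b := by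
        have h0 : (y - z) * ((y ^ 2 + y * z + z ^ 2) - b) = 0 := by
          linear_combination hy - hz
        rcases mul_eq_zero.mp h0 with h' | h'
        · exact absurd (sub_eq_zero.mp h').symm hzy
        · exact sub_eq_zero.mp h'
      have h0 : (x - y) * (x + y + z) = 0 := by linear_combination e1 - e2
      rcases mul_eq_zero.mp h0 with h' | h'
      · exact hxy (sub_eq_zero.mp h')
      · exact hzs (by linear_combination h')
    calc (rs α b).card ≤ ({x, y, -x - y} : Finset (ZMod p)).card :=
          Finset.card_le_card hsub
      _ ≤ ({y, -x - y} : Finset (ZMod p)).card + 1 := Finset.card_insert_le _ _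
      _ ≤ (({-x - y} : Finset (ZMod p)).card + 1) + 1 :=
          Nat.add_le_add_right (Finset.card_insert_le _ _) 1
      _ ≤ 3 := by simp
  · push_neg at h
    exact le_trans (Finset.card_le_one.mpr fun a ha c hc => h a ha c hc) (by norm_num)

lemma sum_offDiag_rs (α : ZMod p) :
    ∑ b : ZMod p, (rs α b).offDiag.card
      = (univ.filter fun q : ZMod p × ZMod p =>
          q.1 ≠ q.2 ∧ q.1 * q.2 * (q.1 + q.2) = α).card := by
  have key : ∀ q : ZMod p × ZMod p,
      (univ.filter fun b : ZMod p =>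
        (q.1 ^ 3 + α = b * q.1 ∧ q.2 ^ 3 + α = b * q.2) ∧ q.1 ≠ q.2).card
      = if q.1 ≠ q.2 ∧ q.1 * q.2 * (q.1 + q.2) = α then 1 else 0 := by
    rintro ⟨x, y⟩
    simp only
    split_ifs with h
    · obtain ⟨hne, hcond⟩ := h
      rw [Finset.card_eq_one]
      refine ⟨x ^ 2 + x * y + y ^ 2, ?_⟩
      ext b
      simp only [mem_filter, mem_univ, true_and, Finset.mem_singleton]
      constructor
      · rintro ⟨⟨h1, h2⟩, -⟩
        have h0 : (x - y) * ((x ^ 2 + x * y + y ^ 2) - b) = 0 := by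
          linear_combination h1 - h2
        rcases mul_eq_zero.mp h0 with h' | h'
        · exact absurd (sub_eq_zero.mp h') hne
        · exact (sub_eq_zero.mp h').symm
      · rintro rfl
        exact ⟨⟨by linear_combination -hcond, by linear_combination -hcond⟩, hne⟩
    · rw [Finset.card_eq_zero, Finset.filter_eq_empty_iff]
      rintro b - ⟨⟨h1, h2⟩, hne⟩
      apply h
      refine ⟨hne, ?_⟩
      have h0 : (x - y) * ((x ^ 2 + x * y + y ^ 2) - b) = 0 := by
        linear_combination h1 - h2
      have hb : x ^ 2 + x * y + y ^ 2 = b := by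
        rcases mul_eq_zero.mp h0 with h' | h'
        · exact absurd (sub_eq_zero.mp h') hne
        · exact sub_eq_zero.mp h'
      linear_combination x * hb - h1
  calc ∑ b : ZMod p, (rs α b).offDiag.card
      = ∑ b : ZMod p, ∑ q ∈ univ.offDiag, (if q.1 ∈ rs α b ∧ q.2 ∈ rs α b then 1 else 0) := by
        refine Finset.sum_congr rfl (fun b _ => ?_)
        rw [show (rs α b).offDiag
            = (univ.offDiag (α := ZMod p)).filter
                (fun q => q.1 ∈ rs α b ∧ q.2 ∈ rs α b) from ?_, Finset.card_filter]
        ext q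
        simp only [Finset.mem_offDiag, mem_filter, mem_univ, true_and]
        tauto
    _ = ∑ b : ZMod p, ∑ q : ZMod p × ZMod p,
          (if (q.1 ^ 3 + α = b * q.1 ∧ q.2 ^ 3 + α = b * q.2) ∧ q.1 ≠ q.2 then 1 else 0) := by
        refine Finset.sum_congr rfl (fun b _ => ?_)
        rw [show (univ.offDiag (α := ZMod p))
            = univ.filter (fun q : ZMod p × ZMod p => q.1 ≠ q.2) from by
              ext q; simp [Finset.mem_offDiag], Finset.sum_filter]
        refine Finset.sum_congr rfl (fun q _ => ?_)
        by_cases hne : q.1 ≠ q.2 <;> simp [mem_rs, hne]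
    _ = ∑ q : ZMod p × ZMod p, ∑ b : ZMod p,
          (if (q.1 ^ 3 + α = b * q.1 ∧ q.2 ^ 3 + α = b * q.2) ∧ q.1 ≠ q.2 then 1 else 0) :=
        Finset.sum_comm
    _ = ∑ q : ZMod p × ZMod p,
          (if q.1 ≠ q.2 ∧ q.1 * q.2 * (q.1 + q.2) = α then 1 else 0) := by
        refine Finset.sum_congr rfl (fun q _ => ?_)
        rw [← key q, Finset.card_filter]
    _ = (univ.filter fun q : ZMod p × ZMod p =>
          q.1 ≠ q.2 ∧ q.1 * q.2 * (q.1 + q.2) = α).card := (Finset.card_filter _ _).symm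

lemma card_cond_pairs (hp3 : 3 < p) (hp2 : p % 3 = 2) (α : ZMod p) (hα : α ≠ 0) :
    (univ.filter fun q : ZMod p × ZMod p =>
      q.1 ≠ q.2 ∧ q.1 * q.2 * (q.1 + q.2) = α).card = p - 3 := by
  have hp5 : 5 ≤ p := by omega
  have hndvd : ∀ m : ℕ, 0 < m → m < p → ((m : ZMod p) ≠ 0) := by
    intro m hm hmp
    rw [Ne, ZMod.natCast_eq_zero_iff]
    intro h
    exact absurd (Nat.le_of_dvd hm h) (by omega)
  have h2 : (2 : ZMod p) ≠ 0 := by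
    have := hndvd 2 (by norm_num) (by omega); push_cast at this; exact this
  have h4 : (4 : ZMod p) ≠ 0 := by
    have := hndvd 4 (by norm_num) (by omega); push_cast at this; exact this
  have hc : -(4 * α ^ 2) ≠ 0 := by
    exact neg_ne_zero.mpr (mul_ne_zero h4 (pow_ne_zero _ hα))
  -- C6
  have hC6 : (univ.filter fun q : ZMod p × ZMod p =>
      q.1 * q.2 = -(4 * α ^ 2)).card = p - 1 := by
    rw [← card_ne_zero_filter (p := p)]
    refine Finset.card_nbij' (fun q => q.1) (fun d => (d, -(4 * α ^ 2) * d⁻¹)) ?_ ?_ ?_ ?_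
    · intro q hq
      simp only [Finset.mem_coe, mem_filter, mem_univ, true_and] at hq ⊢
      intro h0
      rw [h0, zero_mul] at hq
      exact hc hq.symm
    · intro d hd
      simp only [Finset.mem_coe, mem_filter, mem_univ, true_and] at hd ⊢
      field_simp
    · intro q hq
      simp only [Finset.mem_coe, mem_filter, mem_univ, true_and] at hq
      have h1 : q.1 ≠ 0 := by
        intro h0
        rw [h0, zero_mul] at hq
        exact hc hq.symm
      have : q.2 = -(4 * α ^ 2) * q.1⁻¹ := by
        field_simp
        linear_combination hq
      exact Prod.ext rfl this.symm
    · intro d hd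
      rfl
  -- C4 = C6
  have hC4 : (univ.filter fun q : ZMod p × ZMod p =>
      q.2 ^ 2 = q.1 ^ 2 + 4 * α * q.1).card = p - 1 := by
    rw [← hC6]
    refine Finset.card_nbij'
      (fun q => (q.2 - (q.1 + 2 * α), q.2 + (q.1 + 2 * α)))
      (fun q => ((q.2 - q.1) / 2 - 2 * α, (q.1 + q.2) / 2)) ?_ ?_ ?_ ?_
    · intro q hq
      simp only [Finset.mem_coe, mem_filter, mem_univ, true_and] at hq ⊢
      linear_combination hq
    · intro q hq
      simp only [Finset.mem_coe, mem_filter, mem_univ, true_and] at hq ⊢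
      field_simp
      linear_combination 4 * hq
    · intro q hq
      have e1 : (q.2 + (q.1 + 2 * α) - (q.2 - (q.1 + 2 * α))) / 2 - 2 * α = q.1 := by
        field_simp; ring
      have e2 : (q.2 - (q.1 + 2 * α) + (q.2 + (q.1 + 2 * α))) / 2 = q.2 := by
        field_simp; ring
      exact Prod.ext e1 e2
    · intro q hq
      have e1 : (q.1 + q.2) / 2 - ((q.2 - q.1) / 2 - 2 * α + 2 * α) = q.1 := by
        field_simp; ring
      have e2 : (q.1 + q.2) / 2 + ((q.2 - q.1) / 2 - 2 * α + 2 * α) = q.2 := by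
        field_simp; ring
      exact Prod.ext e1 e2
  -- C3 = C4
  have hC3 : (univ.filter fun q : ZMod p × ZMod p =>
      q.2 ^ 2 = q.1 ^ 6 + 4 * α * q.1 ^ 3).card = p - 1 := by
    rw [← hC4]
    refine Finset.card_nbij (fun q => (q.1 ^ 3, q.2)) ?_ ?_ ?_
    · intro q hq
      simp only [Finset.mem_coe, mem_filter, mem_univ, true_and] at hq ⊢
      linear_combination hq
    · intro q hq q' hq' h
      simp only [Prod.mk.injEq] at h
      exact Prod.ext (cube_inj hp2 h.1) h.2
    · intro q hq
      obtain ⟨x, hx⟩ := (cube_bij hp2).surjective q.1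
      simp only at hx
      simp only [Finset.coe_filter, Set.mem_setOf_eq, mem_univ, true_and] at hq
      refine ⟨(x, q.2), ?_, ?_⟩
      · simp only [Finset.coe_filter, Set.mem_setOf_eq, mem_univ, true_and]
        rw [← hx] at hq
        linear_combination hq
      · exact Prod.ext hx rfl
  -- C2 : C3 minus the point (0,0)
  have hC2 : (univ.filter fun q : ZMod p × ZMod p =>
      (q.2 ^ 2 = q.1 ^ 6 + 4 * α * q.1 ^ 3) ∧ q.1 ≠ 0).card = p - 2 := by
    have hsplit := Finset.card_filter_add_card_filter_not
      (s := univ.filter fun q : ZMod p × ZMod p => q.2 ^ 2 = q.1 ^ 6 + 4 * α * q.1 ^ 3)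
      (p := fun q => q.1 ≠ 0)
    rw [Finset.filter_filter, Finset.filter_filter] at hsplit
    have hone : ((univ.filter fun q : ZMod p × ZMod p =>
        (q.2 ^ 2 = q.1 ^ 6 + 4 * α * q.1 ^ 3) ∧ ¬ q.1 ≠ 0)).card = 1 := by
      rw [Finset.card_eq_one]
      refine ⟨((0 : ZMod p), (0 : ZMod p)), ?_⟩
      ext q
      simp only [mem_filter, mem_univ, true_and, Finset.mem_singleton, not_not]
      constructor
      · rintro ⟨heq, h10⟩
        rw [h10] at heq
        have : q.2 ^ 2 = 0 := by rw [heq]; ring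
        have h20 : q.2 = 0 := by
          exact pow_eq_zero_iff (by norm_num) |>.mp this
        exact Prod.ext h10 h20
      · rintro rfl
        norm_num
    rw [hone, hC3] at hsplit
    omega
  -- Q = C2
  have hQ : (univ.filter fun q : ZMod p × ZMod p =>
      q.1 * q.2 * (q.1 + q.2) = α).card = p - 2 := by
    rw [← hC2]
    have hx0 : ∀ q : ZMod p × ZMod p, q.1 * q.2 * (q.1 + q.2) = α → q.1 ≠ 0 := by
      intro q hq h0
      rw [h0] at hq
      simp at hq
      exact hα hq.symm
    refine Finset.card_nbij'
      (fun q => (q.1, (2 * q.2 + q.1) * q.1 ^ 2))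
      (fun q => (q.1, (q.2 - q.1 ^ 3) / (2 * q.1 ^ 2))) ?_ ?_ ?_ ?_
    · intro q hq
      simp only [Finset.mem_coe, mem_filter, mem_univ, true_and] at hq ⊢
      refine ⟨by linear_combination 4 * q.1 ^ 3 * hq, hx0 q hq⟩
    · intro q hq
      simp only [Finset.mem_coe, mem_filter, mem_univ, true_and] at hq ⊢
      obtain ⟨heq, h10⟩ := hq
      field_simp
      linear_combination heq
    · intro q hq
      simp only [Finset.mem_coe, mem_filter, mem_univ, true_and] at hq
      have h10 := hx0 q hq
      have e2 : ((2 * q.2 + q.1) * q.1 ^ 2 - q.1 ^ 3) / (2 * q.1 ^ 2) = q.2 := by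
        field_simp; ring
      exact Prod.ext rfl e2
    · intro q hq
      simp only [Finset.mem_coe, mem_filter, mem_univ, true_and] at hq
      obtain ⟨heq, h10⟩ := hq
      have e2 : (2 * ((q.2 - q.1 ^ 3) / (2 * q.1 ^ 2)) + q.1) * q.1 ^ 2 = q.2 := by
        field_simp; ring
      exact Prod.ext rfl e2
  -- split off the diagonal
  obtain ⟨r, hr⟩ := (cube_bij hp2).surjective (α / 2)
  simp only at hr
  have hr2 : 2 * r ^ 3 = α := by
    rw [hr]; field_simp
  have hsplit := Finset.card_filter_add_card_filter_not
    (s := univ.filter fun q : ZMod p × ZMod p => q.1 * q.2 * (q.1 + q.2) = α)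
    (p := fun q => q.1 ≠ q.2)
  rw [Finset.filter_filter, Finset.filter_filter] at hsplit
  have hone : ((univ.filter fun q : ZMod p × ZMod p =>
      (q.1 * q.2 * (q.1 + q.2) = α) ∧ ¬ q.1 ≠ q.2)).card = 1 := by
    rw [Finset.card_eq_one]
    refine ⟨(r, r), ?_⟩
    ext q
    simp only [mem_filter, mem_univ, true_and, Finset.mem_singleton, not_not]
    constructor
    · rintro ⟨heq, hd⟩
      rw [← hd] at heq
      have h3 : q.1 ^ 3 = r ^ 3 := by
        have hq3 : 2 * q.1 ^ 3 = α := by linear_combination heq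
        have := hq3.trans hr2.symm
        exact mul_left_cancel₀ h2 this
      have h1 : q.1 = r := cube_inj hp2 h3
      exact Prod.ext h1 (hd ▸ h1)
    · rintro rfl
      exact ⟨by linear_combination hr2, rfl⟩
  have hiff : (univ.filter fun q : ZMod p × ZMod p =>
      (q.1 * q.2 * (q.1 + q.2) = α) ∧ q.1 ≠ q.2)
      = (univ.filter fun q : ZMod p × ZMod p =>
      q.1 ≠ q.2 ∧ q.1 * q.2 * (q.1 + q.2) = α) := by
    apply Finset.filter_congr
    intro q _
    exact and_comm
  rw [hiff, hone, hQ] at hsplit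
  omega

lemma card_two_unique (hp3 : 3 < p) (hp2 : p % 3 = 2) (α : ZMod p) (hα : α ≠ 0) :
    (univ.filter fun b : ZMod p => (rs α b).card = 2).card = 1 := by
  have hndvd : ∀ m : ℕ, 0 < m → m < p → ((m : ZMod p) ≠ 0) := by
    intro m hm hmp
    rw [Ne, ZMod.natCast_eq_zero_iff]
    intro h
    exact absurd (Nat.le_of_dvd hm h) (by omega)
  have h2 : (2 : ZMod p) ≠ 0 := by
    have := hndvd 2 (by norm_num) (by omega); push_cast at this; exact this
  have h3 : (3 : ZMod p) ≠ 0 := by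
    have := hndvd 3 (by norm_num) (by omega); push_cast at this; exact this
  obtain ⟨r, hr⟩ := (cube_bij hp2).surjective (α / 2)
  simp only at hr
  have hr2 : 2 * r ^ 3 = α := by rw [hr]; field_simp
  have hrne : r ≠ 0 := by
    intro h
    rw [h] at hr2
    exact hα (by linear_combination -hr2)
  have hr3 : r ≠ -(2 * r) := by
    intro h
    have h30 : (3 : ZMod p) * r = 0 := by linear_combination h
    rcases mul_eq_zero.mp h30 with h' | h'
    · exact h3 h'
    · exact hrne h'
  rw [Finset.card_eq_one]
  refine ⟨3 * r ^ 2, ?_⟩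
  ext b
  simp only [mem_filter, mem_univ, true_and, Finset.mem_singleton]
  constructor
  · intro hcard
    obtain ⟨x, y, hxy, hset⟩ := Finset.card_eq_two.mp hcard
    have hx : x ∈ rs α b := by rw [hset]; simp
    have hy : y ∈ rs α b := by rw [hset]; simp
    rw [mem_rs] at hx hy
    have hb : x ^ 2 + x * y + y ^ 2 = b := by
      have h0 : (x - y) * ((x ^ 2 + x * y + y ^ 2) - b) = 0 := by
        linear_combination hx - hy
      rcases mul_eq_zero.mp h0 with h' | h'
      · exact absurd (sub_eq_zero.mp h') hxy
      · exact sub_eq_zero.mp h'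
    have hαxy : x * y * (x + y) = α := by linear_combination x * hb - hx
    have hz : (-x - y) ∈ rs α b := by
      rw [mem_rs]
      linear_combination (-(x + y)) * hb - hαxy
    rw [hset] at hz
    rcases Finset.mem_insert.mp hz with hzx | hzy'
    · -- -x - y = x, so y = -2x
      have hy2 : y = -(2 * x) := by linear_combination -hzx
      rw [hy2] at hαxy
      have h2x : 2 * x ^ 3 = α := by linear_combination hαxy
      have hxr : x = r := cube_inj hp2 (mul_left_cancel₀ h2 (h2x.trans hr2.symm))
      rw [hy2, hxr] at hb
      linear_combination -hb
    · have hzy := Finset.mem_singleton.mp hzy'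
      have hx2 : x = -(2 * y) := by linear_combination -hzy
      rw [hx2] at hαxy
      have h2y : 2 * y ^ 3 = α := by linear_combination hαxy
      have hyr : y = r := cube_inj hp2 (mul_left_cancel₀ h2 (h2y.trans hr2.symm))
      rw [hx2, hyr] at hb
      linear_combination -hb
  · rintro rfl
    have hset : rs α (3 * r ^ 2) = {r, -(2 * r)} := by
      ext z
      rw [mem_rs]
      simp only [Finset.mem_insert, Finset.mem_singleton]
      constructor
      · intro hz
        have h0 : (z - r) ^ 2 * (z + 2 * r) = 0 := by
          linear_combination hz + hr2
        rcases mul_eq_zero.mp h0 with h' | h'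
        · left
          exact sub_eq_zero.mp (pow_eq_zero_iff (two_ne_zero) |>.mp h')
        · right
          linear_combination h'
      · rintro (rfl | rfl)
        · linear_combination -hr2
        · linear_combination -hr2
    rw [hset, Finset.card_pair hr3]

lemma main_count (hp3 : 3 < p) (hp2 : p % 3 = 2) (α : ZMod p) (hα : α ≠ 0) :
    3 * ((univ.filter fun b : ZMod p =>
      ∃ x, x ≠ 0 ∧ x ^ 3 + α = b * x).card : ℤ) = 2 * p - 1 := by
  have hfe : (univ.filter fun b : ZMod p => ∃ x, x ≠ 0 ∧ x ^ 3 + α = b * x)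
      = (univ.filter fun b : ZMod p => (rs α b).Nonempty) := by
    apply Finset.filter_congr
    intro b _
    constructor
    · rintro ⟨x, -, hx⟩
      exact ⟨x, mem_rs.mpr hx⟩
    · rintro ⟨x, hx⟩
      rw [mem_rs] at hx
      refine ⟨x, ?_, hx⟩
      intro h0
      rw [h0] at hx
      apply hα
      linear_combination hx
  rw [hfe]
  have key : ∀ b : ZMod p,
      (3 : ℤ) * (if (rs α b).Nonempty then 1 else 0)
        = 3 * ((rs α b).card : ℤ) - ((rs α b).offDiag.card : ℤ)
          - (if (rs α b).card = 2 then 1 else 0) := by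
    intro b
    have hle := card_rs_le_three α b
    have hc : (rs α b).card = 0 ∨ (rs α b).card = 1 ∨ (rs α b).card = 2
        ∨ (rs α b).card = 3 := by omega
    rcases hc with h | h | h | h
    · have he : rs α b = ∅ := Finset.card_eq_zero.mp h
      rw [Finset.offDiag_card, h, he]
      simp
    · have hne : (rs α b).Nonempty := Finset.card_pos.mp (by omega)
      rw [Finset.offDiag_card, h, if_pos hne]
      norm_num
    · have hne : (rs α b).Nonempty := Finset.card_pos.mp (by omega)
      rw [Finset.offDiag_card, h, if_pos hne]
      norm_num
    · have hne : (rs α b).Nonempty := Finset.card_pos.mp (by omega)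
      rw [Finset.offDiag_card, h, if_pos hne]
      norm_num
  calc (3:ℤ) * (((univ.filter fun b : ZMod p => (rs α b).Nonempty).card : ℕ) : ℤ)
      = ∑ b : ZMod p, (3:ℤ) * (if (rs α b).Nonempty then 1 else 0) := by
        rw [← Finset.mul_sum, Finset.sum_boole]
    _ = ∑ b : ZMod p, (3 * ((rs α b).card : ℤ) - ((rs α b).offDiag.card : ℤ)
          - (if (rs α b).card = 2 then 1 else 0)) :=
        Finset.sum_congr rfl (fun b _ => key b)
    _ = 3 * ((p:ℤ) - 1) - ((p:ℤ) - 3) - 1 := by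
        rw [Finset.sum_sub_distrib, Finset.sum_sub_distrib, ← Finset.mul_sum]
        have e1 : ∑ b : ZMod p, ((rs α b).card : ℤ) = (p:ℤ) - 1 := by
          rw [← Nat.cast_sum, sum_card_rs α hα, Nat.cast_sub (by omega)]
          norm_num
        have e2 : ∑ b : ZMod p, ((rs α b).offDiag.card : ℤ) = (p:ℤ) - 3 := by
          rw [← Nat.cast_sum, sum_offDiag_rs α, card_cond_pairs hp3 hp2 α hα,
            Nat.cast_sub (by omega)]
          norm_num
        have e3 : ∑ b : ZMod p, (if (rs α b).card = 2 then (1:ℤ) else 0) = 1 := by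
          rw [Finset.sum_boole, card_two_unique hp3 hp2 α hα]
          norm_num
        rw [e1, e2, e3]
    _ = 2 * p - 1 := by ring

end Aux

theorem stmt_0 (p : ℕ) (hp : p.Prime) (hp3 : 3 < p) (hp2 : p % 3 = 2)
    (a : ℤ) (ha : ¬ (p : ℤ) ∣ a) :
    3 * (((Finset.range p).filter (fun b : ℕ =>
      ∃ x ∈ Finset.Icc 1 (p - 1),
        (x : ℤ) ^ 3 + (a) ≡ (b : ℤ) * (x : ℤ) [ZMOD (p : ℤ)])).card : ℤ) = 2 * (p : ℤ) - 1 := by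
  haveI : Fact p.Prime := ⟨hp⟩
  have hα : (a : ZMod p) ≠ 0 := by
    rw [Ne, ZMod.intCast_zmod_eq_zero_iff_dvd]; exact ha
  have hbij : ((Finset.range p).filter (fun b : ℕ =>
      ∃ x ∈ Finset.Icc 1 (p - 1),
        (x : ℤ) ^ 3 + (a) ≡ (b : ℤ) * (x : ℤ) [ZMOD (p : ℤ)])).card
      = (univ.filter fun b : ZMod p =>
          ∃ x, x ≠ 0 ∧ x ^ 3 + (a : ZMod p) = b * x).card := by
    refine Finset.card_nbij' (fun b => (b : ZMod p)) (fun x => x.val) ?_ ?_ ?_ ?_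
    · intro b hb
      simp only [Finset.mem_coe, mem_filter, mem_range] at hb
      obtain ⟨hblt, x, hx, hmod⟩ := hb
      simp only [Finset.mem_Icc] at hx
      refine mem_filter.mpr ⟨mem_univ _, (x : ZMod p), ?_, ?_⟩
      · rw [Ne, ZMod.natCast_eq_zero_iff]
        intro hdvd
        have := Nat.le_of_dvd (by omega) hdvd
        omega
      · have := (ZMod.intCast_eq_intCast_iff ((x : ℤ) ^ 3 + a) ((b : ℤ) * (x : ℤ)) p).mpr hmod
        push_cast at this
        exact this
    · intro ξ hξ
      simp only [Finset.mem_coe, mem_filter, mem_univ, true_and] at hξ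
      obtain ⟨x, hx0, heq⟩ := hξ
      have hplt : 0 < p := Fact.out (p := p.Prime) |>.pos
      refine mem_filter.mpr ⟨mem_range.mpr (ZMod.val_lt ξ), x.val, ?_, ?_⟩
      · simp only [Finset.mem_Icc]
        have h1 : x.val ≠ 0 := by
          rw [Ne, ZMod.val_eq_zero]; exact hx0
        have h2 : x.val < p := ZMod.val_lt x
        omega
      · rw [← ZMod.intCast_eq_intCast_iff]
        push_cast
        rw [ZMod.natCast_val, ZMod.natCast_val, ZMod.cast_id, ZMod.cast_id]
        exact heq
    · intro b hb
      simp only [Finset.mem_coe, mem_filter, mem_range] at hb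
      exact ZMod.val_natCast_of_lt hb.1
    · intro ξ _
      simp [ZMod.natCast_val, ZMod.cast_id]
  rw [hbij]
  exact main_count hp3 hp2 _ hα
end

section
/- Let p > 3 be a prime, let t be an integer with p ∤ t, and let H_p = {x ∈ {0, 2, 3, …, (p−1)/2} : x² ≢ −3 (mod p)}. If there exists x ∈ H_p with (x² + 3)³ ≡ t·(x² − 1)² (mod p), then the number of x ∈ H_p satisfying (x² + 3)³ ≡ t·(x² − 1)² (mod p) equals 3 if t ≢ 27 (mod p), and equals 2 if t ≡ 27 (mod p). -/
theorem stmt_9 (p : ℕ) (hp : p.Prime) (hp3 : 3 < p)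
    (t : ℤ) (ht : ¬ (p : ℤ) ∣ t)
    (hsol : ∃ x ∈ ((Finset.range ((p - 1) / 2 + 1)).filter (fun x : ℕ =>
      x ≠ 1 ∧ ¬ ((x : ℤ) ^ 2 ≡ -3 [ZMOD (p : ℤ)]))), ((x : ℤ) ^ 2 + 3) ^ 3 ≡ t * ((x : ℤ) ^ 2 - 1) ^ 2 [ZMOD (p : ℤ)]) :
    (¬ (t ≡ 27 [ZMOD (p : ℤ)]) →
      (((Finset.range ((p - 1) / 2 + 1)).filter (fun x : ℕ =>
      x ≠ 1 ∧ ¬ ((x : ℤ) ^ 2 ≡ -3 [ZMOD (p : ℤ)]))).filter (fun x : ℕ => ((x : ℤ) ^ 2 + 3) ^ 3 ≡ t * ((x : ℤ) ^ 2 - 1) ^ 2 [ZMOD (p : ℤ)])).card = 3) ∧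
    ((t ≡ 27 [ZMOD (p : ℤ)]) →
      (((Finset.range ((p - 1) / 2 + 1)).filter (fun x : ℕ =>
      x ≠ 1 ∧ ¬ ((x : ℤ) ^ 2 ≡ -3 [ZMOD (p : ℤ)]))).filter (fun x : ℕ => ((x : ℤ) ^ 2 + 3) ^ 3 ≡ t * ((x : ℤ) ^ 2 - 1) ^ 2 [ZMOD (p : ℤ)])).card = 2) := by
  classical
  haveI : Fact p.Prime := ⟨hp⟩
  have hp0 : p ≠ 0 := hp.ne_zero
  have hpodd : p % 2 = 1 := Nat.odd_iff.mp (hp.odd_of_ne_two (by omega))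
  -- basic nonzero numerals in ZMod p
  have hnum : ∀ m : ℕ, 0 < m → m < p → ((m : ZMod p) ≠ 0) := by
    intro m hm hmp h
    have := (ZMod.natCast_eq_zero_iff m p).mp h
    have := Nat.le_of_dvd hm this
    omega
  have h2 : (2 : ZMod p) ≠ 0 := by
    have := hnum 2 (by norm_num) (by omega); exact_mod_cast this
  have h3 : (3 : ZMod p) ≠ 0 := by
    have := hnum 3 (by norm_num) (by omega); exact_mod_cast this
  have h8 : (8 : ZMod p) ≠ 0 := by
    have : (8 : ZMod p) = 2 ^ 3 := by norm_num
    rw [this]; exact pow_ne_zero _ h2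
  have h16 : (16 : ZMod p) ≠ 0 := by
    have : (16 : ZMod p) = 2 ^ 4 := by norm_num
    rw [this]; exact pow_ne_zero _ h2
  have h64 : (64 : ZMod p) ≠ 0 := by
    have : (64 : ZMod p) = 2 ^ 6 := by norm_num
    rw [this]; exact pow_ne_zero _ h2
  set tk : ZMod p := (t : ZMod p) with htk
  have htk0 : tk ≠ 0 := by
    rw [htk, Ne, ZMod.intCast_zmod_eq_zero_iff_dvd]; exact ht
  -- conversion of the modular conditions to equalities in ZMod p
  have hQ : ∀ x : ℕ, (((x : ℤ) ^ 2 + 3) ^ 3 ≡ t * ((x : ℤ) ^ 2 - 1) ^ 2 [ZMOD (p : ℤ)]) ↔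
      (((x : ZMod p) ^ 2 + 3) ^ 3 = tk * ((x : ZMod p) ^ 2 - 1) ^ 2) := by
    intro x
    rw [← ZMod.intCast_eq_intCast_iff]
    push_cast
    rfl
  have hM3 : ∀ x : ℕ, ((x : ℤ) ^ 2 ≡ -3 [ZMOD (p : ℤ)]) ↔ ((x : ZMod p) ^ 2 = -3) := by
    intro x
    rw [← ZMod.intCast_eq_intCast_iff]
    push_cast
    rfl
  have h27iff : (t ≡ 27 [ZMOD (p : ℤ)]) ↔ tk = 27 := by
    rw [← ZMod.intCast_eq_intCast_iff, htk]
    push_cast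
    rfl
  -- any solution automatically satisfies the side conditions
  have hauto : ∀ x : ℕ, (((x : ZMod p) ^ 2 + 3) ^ 3 = tk * ((x : ZMod p) ^ 2 - 1) ^ 2) →
      (x : ZMod p) ^ 2 ≠ 1 ∧ (x : ZMod p) ^ 2 ≠ -3 := by
    intro x hPx
    constructor
    · intro h1
      rw [h1] at hPx
      have : (64 : ZMod p) = 0 := by linear_combination hPx
      exact h64 this
    · intro h1
      rw [h1] at hPx
      have : tk * 16 = 0 := by linear_combination -hPx
      rcases mul_eq_zero.mp this with h | h
      · exact htk0 h
      · exact h16 h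
  -- the set in the statement equals a clean filter
  have hTF : (((Finset.range ((p - 1) / 2 + 1)).filter (fun x : ℕ =>
      x ≠ 1 ∧ ¬ ((x : ℤ) ^ 2 ≡ -3 [ZMOD (p : ℤ)]))).filter (fun x : ℕ =>
      ((x : ℤ) ^ 2 + 3) ^ 3 ≡ t * ((x : ℤ) ^ 2 - 1) ^ 2 [ZMOD (p : ℤ)])) =
      (Finset.range ((p - 1) / 2 + 1)).filter (fun x : ℕ =>
        ((x : ZMod p) ^ 2 + 3) ^ 3 = tk * ((x : ZMod p) ^ 2 - 1) ^ 2) := by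
    ext x
    simp only [Finset.mem_filter, Finset.mem_range]
    constructor
    · rintro ⟨⟨hr, -, -⟩, hq⟩
      exact ⟨hr, (hQ x).mp hq⟩
    · rintro ⟨hr, hq⟩
      refine ⟨⟨hr, ?_, ?_⟩, (hQ x).mpr hq⟩
      · rintro rfl
        exact (hauto 1 hq).1 (by norm_num)
      · intro hm
        exact (hauto x hq).2 ((hM3 x).mp hm)
  -- representative function
  set N := (p - 1) / 2 with hN
  let r : ZMod p → ℕ := fun w => min w.val (-w).val
  have hvlt : ∀ w : ZMod p, w.val < p := fun w => ZMod.val_lt w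
  have hvneg : ∀ w : ZMod p, w ≠ 0 → (-w).val = p - w.val := by
    intro w hw
    rw [ZMod.neg_val]
    simp [hw]
  have hv0 : ∀ w : ZMod p, w ≠ 0 → w.val ≠ 0 := by
    intro w hw h
    exact hw ((ZMod.val_eq_zero w).mp h)
  have hr_le : ∀ w : ZMod p, w ≠ 0 → r w ≤ N := by
    intro w hw
    have h1 := hvlt w
    have h2 := hvneg w hw
    have h3 := hv0 w hw
    simp only [r]
    omega
  have hr_cast : ∀ w : ZMod p, ((r w : ℕ) : ZMod p) = w ∨ ((r w : ℕ) : ZMod p) = -w := by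
    intro w
    have hc : ∀ u : ZMod p, ((u.val : ℕ) : ZMod p) = u := fun u => by
      rw [ZMod.natCast_val, ZMod.cast_id]
    rcases le_total w.val (-w).val with h | h
    · left; simp only [r, min_eq_left h]; exact hc w
    · right; simp only [r, min_eq_right h]; exact hc (-w)
  have hr_uniq1 : ∀ (x : ℕ) (w : ZMod p), x ≤ N → (x : ZMod p) = w → x = r w := by
    intro x w hx hxw
    have hxp : x < p := by omega
    have hv : w.val = x := by rw [← hxw]; exact ZMod.val_cast_of_lt hxp
    by_cases hw : w = 0
    · have : x = 0 := by rw [← hv, hw, ZMod.val_zero]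
      simp only [r, hw, neg_zero, ZMod.val_zero, min_self]
      exact this
    · have h2 := hvneg w hw
      have h3 := hv0 w hw
      simp only [r, hv, h2]
      omega
  have hr_neg : ∀ w : ZMod p, r (-w) = r w := by
    intro w
    simp only [r, neg_neg]
    exact min_comm _ _
  have hr_uniq : ∀ (x : ℕ) (w : ZMod p), x ≤ N →
      ((x : ZMod p) = w ∨ (x : ZMod p) = -w) → x = r w := by
    intro x w hx h
    rcases h with h | h
    · exact hr_uniq1 x w hx h
    · rw [← hr_neg w]; exact hr_uniq1 x (-w) hx h
  have hr_sign : ∀ u v : ZMod p, r u = r v → u = v ∨ u = -v := by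
    intro u v huv
    rcases hr_cast u with h1 | h1 <;> rcases hr_cast v with h2 | h2 <;>
      rw [huv] at h1 <;> rw [h2] at h1 <;>
      first
        | (left; linear_combination h1)
        | (left; linear_combination -h1)
        | (right; linear_combination h1)
        | (right; linear_combination -h1)
  by_cases h27 : tk = 27
  · -- case t ≡ 27
    refine ⟨fun hne => absurd (h27iff.mpr h27) hne, fun _ => ?_⟩
    rw [hTF]
    have hset : (Finset.range (N + 1)).filter (fun x : ℕ =>
        ((x : ZMod p) ^ 2 + 3) ^ 3 = tk * ((x : ZMod p) ^ 2 - 1) ^ 2) =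
        {0, r (3 : ZMod p)} := by
      ext x
      simp only [Finset.mem_filter, Finset.mem_range, Finset.mem_insert, Finset.mem_singleton]
      constructor
      · rintro ⟨hr1, hq⟩
        rw [h27] at hq
        have hfac : (x : ZMod p) ^ 2 * (((x : ZMod p) - 3) * ((x : ZMod p) + 3)) ^ 2 = 0 := by
          linear_combination hq
        have hx : x ≤ N := by omega
        rcases mul_eq_zero.mp hfac with h | h
        · left
          have hx0 : (x : ZMod p) = 0 := by
            have := pow_eq_zero_iff (n := 2) (by norm_num) |>.mp h
            exact this
          have := hr_uniq1 x 0 hx hx0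
          simpa [r] using this
        · right
          have := pow_eq_zero_iff (n := 2) (M₀ := ZMod p) (by norm_num) |>.mp h
          rcases mul_eq_zero.mp this with h' | h'
          · exact hr_uniq x 3 hx (Or.inl (by linear_combination h'))
          · exact hr_uniq x 3 hx (Or.inr (by linear_combination h'))
      · rintro (rfl | rfl)
        · refine ⟨by omega, ?_⟩
          rw [h27]
          push_cast
          ring
        · refine ⟨by have := hr_le 3 h3; omega, ?_⟩
          rcases hr_cast (3 : ZMod p) with h | h <;> rw [h, h27] <;> ring
    rw [hset]
    have hne0 : r (3 : ZMod p) ≠ 0 := by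
      intro h
      rcases hr_cast (3 : ZMod p) with h' | h' <;> rw [h] at h'
      · exact h3 (by exact_mod_cast h'.symm)
      · apply h3
        have h'' : (0 : ZMod p) = -3 := by exact_mod_cast h'
        linear_combination h''
    rw [Finset.card_insert_of_notMem (by simp [Ne, hne0.symm]), Finset.card_singleton]
  · -- case t ≢ 27
    refine ⟨fun _ => ?_, fun hy => absurd (h27iff.mp hy) h27⟩
    obtain ⟨x₀, hx₀mem, hx₀Q⟩ := hsol
    simp only [Finset.mem_filter, Finset.mem_range] at hx₀mem
    obtain ⟨hx₀r, hx₀1, hx₀3⟩ := hx₀mem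
    set z : ZMod p := (x₀ : ZMod p) with hz
    have hPz : (z ^ 2 + 3) ^ 3 = tk * (z ^ 2 - 1) ^ 2 := (hQ x₀).mp hx₀Q
    have hz3 : z ^ 2 ≠ -3 := fun h => hx₀3 ((hM3 x₀).mpr h)
    have hzval : z.val = x₀ := ZMod.val_cast_of_lt (by omega)
    have hz1 : z ≠ 1 := by
      intro h
      have : z.val = 1 := by rw [h, ZMod.val_one]
      omega
    have hz1' : z ≠ -1 := by
      intro h
      have h1 : ((1 : ZMod p)).val = 1 := ZMod.val_one p
      have : z.val = p - 1 := by
        rw [h, hvneg 1 one_ne_zero, h1]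
      omega
    have hzm1 : z - 1 ≠ 0 := sub_ne_zero.mpr hz1
    have hzp1 : z + 1 ≠ 0 := by
      intro h
      exact hz1' (by linear_combination h)
    have hz0 : z ≠ 0 := by
      intro h
      apply h27
      rw [h] at hPz
      linear_combination -hPz
    have hz3a : z ≠ 3 := by
      intro h
      apply h27
      rw [h] at hPz
      have : (64 : ZMod p) * tk = 64 * 27 := by linear_combination -hPz
      exact mul_left_cancel₀ h64 this
    have hz3b : z ≠ -3 := by
      intro h
      apply h27
      rw [h] at hPz
      have : (64 : ZMod p) * tk = 64 * 27 := by linear_combination -hPz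
      exact mul_left_cancel₀ h64 this
    set a : ZMod p := (z - 3) / (z + 1) with ha
    set b : ZMod p := (z + 3) / (z - 1) with hb
    have hid : ∀ w : ZMod p, (w ^ 2 + 3) ^ 3 - tk * (w ^ 2 - 1) ^ 2 =
        (w ^ 2 - z ^ 2) * (w ^ 2 - a ^ 2) * (w ^ 2 - b ^ 2) := by
      intro w
      rw [ha, hb]
      field_simp
      ring_nf
      linear_combination ((w ^ 2 - 1) ^ 2) * hPz
    have hPa : (a ^ 2 + 3) ^ 3 = tk * (a ^ 2 - 1) ^ 2 := by
      have h := hid a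
      have : (a ^ 2 + 3) ^ 3 - tk * (a ^ 2 - 1) ^ 2 = 0 := by rw [h]; ring
      linear_combination this
    have hPb : (b ^ 2 + 3) ^ 3 = tk * (b ^ 2 - 1) ^ 2 := by
      have h := hid b
      have : (b ^ 2 + 3) ^ 3 - tk * (b ^ 2 - 1) ^ 2 = 0 := by rw [h]; ring
      linear_combination this
    -- distinctness
    have ha0 : a ≠ 0 := by
      intro h
      rcases div_eq_zero_iff.mp (ha ▸ h) with h' | h'
      · exact hz3a (by linear_combination h')
      · exact hzp1 h'
    have hb0 : b ≠ 0 := by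
      intro h
      rcases div_eq_zero_iff.mp (hb ▸ h) with h' | h'
      · exact hz3b (by linear_combination h')
      · exact hzm1 h'
    have hza : z ≠ a := by
      intro h
      have h2 : z - 3 = z * (z + 1) := (div_eq_iff hzp1).mp h.symm
      exact hz3 (by linear_combination -h2)
    have hza' : z ≠ -a := by
      intro h
      have hax : a = -z := by rw [h, neg_neg]
      have h2 : z - 3 = -z * (z + 1) := (div_eq_iff hzp1).mp hax
      have hfac : (z + 3) * (z - 1) = 0 := by linear_combination h2
      rcases mul_eq_zero.mp hfac with h' | h'
      · exact hz3b (by linear_combination h')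
      · exact hz1 (by linear_combination h')
    have hzb : z ≠ b := by
      intro h
      have h2 : z + 3 = z * (z - 1) := (div_eq_iff hzm1).mp h.symm
      have hfac : (z - 3) * (z + 1) = 0 := by linear_combination -h2
      rcases mul_eq_zero.mp hfac with h' | h'
      · exact hz3a (by linear_combination h')
      · exact hzp1 h'
    have hzb' : z ≠ -b := by
      intro h
      have hbx : b = -z := by rw [h, neg_neg]
      have h2 : z + 3 = -z * (z - 1) := (div_eq_iff hzm1).mp hbx
      exact hz3 (by linear_combination h2)
    have hab : a ≠ b := by
      intro h
      have h2 : (z - 3) * (z - 1) = (z + 3) * (z + 1) :=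
        (div_eq_div_iff hzp1 hzm1).mp (ha ▸ hb ▸ h)
      have h8z : (8 : ZMod p) * z = 0 := by linear_combination -h2
      rcases mul_eq_zero.mp h8z with h' | h'
      · exact h8 h'
      · exact hz0 h'
    have hab' : a ≠ -b := by
      intro h
      have hbx : (z - 3) / (z + 1) = (-(z + 3)) / (z - 1) := by
        rw [← ha, neg_div, ← hb]; exact h
      have hq2 : (z - 3) * (z - 1) = -(z + 3) * (z + 1) :=
        (div_eq_div_iff hzp1 hzm1).mp hbx
      have hfac : (2 : ZMod p) * (z ^ 2 + 3) = 0 := by linear_combination hq2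
      rcases mul_eq_zero.mp hfac with h' | h'
      · exact h2 h'
      · exact hz3 (by linear_combination h')
    rw [hTF]
    have hset : (Finset.range (N + 1)).filter (fun x : ℕ =>
        ((x : ZMod p) ^ 2 + 3) ^ 3 = tk * ((x : ZMod p) ^ 2 - 1) ^ 2) =
        {r z, r a, r b} := by
      ext x
      simp only [Finset.mem_filter, Finset.mem_range, Finset.mem_insert, Finset.mem_singleton]
      constructor
      · rintro ⟨hr1, hq⟩
        have hx : x ≤ N := by omega
        set w : ZMod p := (x : ZMod p) with hw
        have h0 : (w ^ 2 - z ^ 2) * (w ^ 2 - a ^ 2) * (w ^ 2 - b ^ 2) = 0 := by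
          rw [← hid w]
          rw [hq]
          ring
        rcases mul_eq_zero.mp h0 with h0 | h0
        · rcases mul_eq_zero.mp h0 with h0 | h0
          · have : (w - z) * (w + z) = 0 := by linear_combination h0
            rcases mul_eq_zero.mp this with h' | h'
            · exact Or.inl (hr_uniq x z hx (Or.inl (by linear_combination h')))
            · exact Or.inl (hr_uniq x z hx (Or.inr (by linear_combination h')))
          · have : (w - a) * (w + a) = 0 := by linear_combination h0
            rcases mul_eq_zero.mp this with h' | h'
            · exact Or.inr (Or.inl (hr_uniq x a hx (Or.inl (by linear_combination h'))))
            · exact Or.inr (Or.inl (hr_uniq x a hx (Or.inr (by linear_combination h'))))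
        · have : (w - b) * (w + b) = 0 := by linear_combination h0
          rcases mul_eq_zero.mp this with h' | h'
          · exact Or.inr (Or.inr (hr_uniq x b hx (Or.inl (by linear_combination h'))))
          · exact Or.inr (Or.inr (hr_uniq x b hx (Or.inr (by linear_combination h'))))
      · have heven : ∀ u : ZMod p, (u ^ 2 + 3) ^ 3 = tk * (u ^ 2 - 1) ^ 2 →
            ∀ v : ZMod p, (v = u ∨ v = -u) → (v ^ 2 + 3) ^ 3 = tk * (v ^ 2 - 1) ^ 2 := by
          rintro u hu v (rfl | rfl)
          · exact hu
          · have : (-u) ^ 2 = u ^ 2 := by ring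
            rw [this]; exact hu
        rintro (rfl | rfl | rfl)
        · exact ⟨by have := hr_le z hz0; omega, heven z hPz _ (hr_cast z)⟩
        · exact ⟨by have := hr_le a ha0; omega, heven a hPa _ (hr_cast a)⟩
        · exact ⟨by have := hr_le b hb0; omega, heven b hPb _ (hr_cast b)⟩
    rw [hset]
    have hrza : r z ≠ r a := by
      intro h
      rcases hr_sign z a h with h' | h'
      · exact hza h'
      · exact hza' h'
    have hrzb : r z ≠ r b := by
      intro h
      rcases hr_sign z b h with h' | h'
      · exact hzb h'
      · exact hzb' h'
    have hrab : r a ≠ r b := by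
      intro h
      rcases hr_sign a b h with h' | h'
      · exact hab h'
      · exact hab' h'
    rw [Finset.card_insert_of_notMem (by simp [hrza, hrzb]),
      Finset.card_insert_of_notMem (by simp [hrab]), Finset.card_singleton]
end

section
/- Let p > 3 be a prime and let a be an integer with p ∤ a. Then Σ_{b=0}^{p−1} ((4b³ − 27a²)/p) = ((−3)/p) + ((−6)/p)·Σ_{y=1}^{p−1} ((y³ + 2a²)/p), where (·/p) is the Legendre symbol. -/
theorem stmt_12 (p : ℕ) [hp : Fact p.Prime] (hp3 : 3 < p)
    (a : ℤ) (ha : ¬ (p : ℤ) ∣ a) :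
    ∑ b ∈ Finset.range p, legendreSym p (4 * (b : ℤ) ^ 3 - 27 * a ^ 2)
      = legendreSym p (-3) + legendreSym p (-6) * (∑ y ∈ Finset.Icc 1 (p - 1), legendreSym p ((y : ℤ) ^ 3 + 2 * a ^ 2)) := by
  classical
  have hpp := hp.out
  set χ := quadraticChar (ZMod p) with hχ
  set A : ZMod p := (a : ZMod p) with hA
  have hA0 : A ≠ 0 := by
    rw [hA, Ne, ZMod.intCast_zmod_eq_zero_iff_dvd]; exact ha
  have h2 : (2 : ZMod p) ≠ 0 := by
    have : ((2 : ℕ) : ZMod p) ≠ 0 := by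
      rw [Ne, ZMod.natCast_eq_zero_iff]
      intro h; have := Nat.le_of_dvd (by norm_num) h; omega
    simpa using this
  have h3 : (3 : ZMod p) ≠ 0 := by
    have : ((3 : ℕ) : ZMod p) ≠ 0 := by
      rw [Ne, ZMod.natCast_eq_zero_iff]
      intro h; have := Nat.le_of_dvd (by norm_num) h; omega
    simpa using this
  -- Step 1: LHS as a sum over ZMod p
  have step1 : ∑ b ∈ Finset.range p, legendreSym p (4 * (b : ℤ) ^ 3 - 27 * a ^ 2)
      = ∑ x : ZMod p, χ (4 * x ^ 3 - 27 * A ^ 2) := by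
    refine Finset.sum_nbij' (fun b => ((b : ℕ) : ZMod p)) (fun x => x.val)
      (fun b _ => Finset.mem_univ _) (fun x _ => Finset.mem_range.2 (ZMod.val_lt x))
      (fun b hb => ?_) (fun x _ => by simp)
      (fun b _ => ?_)
    · exact ZMod.val_cast_of_lt (Finset.mem_range.1 hb)
    · show quadraticChar (ZMod p) _ = _
      push_cast
      rfl
  -- Step 2: substitution x = (-3/2) * y
  set c : ZMod p := -3 * (2 : ZMod p)⁻¹ with hc
  have hc0 : c ≠ 0 := by
    apply mul_ne_zero
    · exact neg_ne_zero.2 h3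
    · exact inv_ne_zero h2
  have step2 : ∑ x : ZMod p, χ (4 * x ^ 3 - 27 * A ^ 2)
      = ∑ y : ZMod p, χ (4 * (c * y) ^ 3 - 27 * A ^ 2) :=
    (Equiv.sum_comp (Equiv.mulLeft₀ c hc0) (fun x => χ (4 * x ^ 3 - 27 * A ^ 2))).symm
  have key : ∀ y : ZMod p, 4 * (c * y) ^ 3 - 27 * A ^ 2
      = (-27 * (2 : ZMod p)⁻¹) * (y ^ 3 + 2 * A ^ 2) := by
    intro y
    rw [hc]
    field_simp
    ring
  have hm27 : χ (-27 * (2 : ZMod p)⁻¹) = χ (-6) := by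
    have h32 : (3 : ZMod p) * (2 : ZMod p)⁻¹ ≠ 0 := mul_ne_zero h3 (inv_ne_zero h2)
    have : (-27 * (2 : ZMod p)⁻¹) = (-6) * ((3 : ZMod p) * (2 : ZMod p)⁻¹) ^ 2 := by
      field_simp
      ring
    rw [this, map_mul, quadraticChar_sq_one' h32, mul_one]
  have step3 : ∑ y : ZMod p, χ (4 * (c * y) ^ 3 - 27 * A ^ 2)
      = χ (-6) * ∑ y : ZMod p, χ (y ^ 3 + 2 * A ^ 2) := by
    rw [Finset.mul_sum]
    refine Finset.sum_congr rfl fun y _ => ?_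
    rw [key y, map_mul, hm27]
  -- Step 4: split off y = 0
  have step4 : ∑ y : ZMod p, χ (y ^ 3 + 2 * A ^ 2)
      = χ (2 * A ^ 2) + ∑ y ∈ Finset.univ.erase (0 : ZMod p), χ (y ^ 3 + 2 * A ^ 2) := by
    rw [← Finset.add_sum_erase Finset.univ _ (Finset.mem_univ (0 : ZMod p))]
    norm_num
  have h2A : χ (2 * A ^ 2) = χ 2 := by
    rw [map_mul, quadraticChar_sq_one' hA0, mul_one]
  have hm6two : χ (-6) * χ 2 = χ (-3) := by
    rw [← map_mul]
    have : (-6 : ZMod p) * 2 = (-3) * 2 ^ 2 := by ring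
    rw [this, map_mul, quadraticChar_sq_one' h2, mul_one]
  -- Step 5: the erased sum equals the Icc sum
  have step5 : ∑ y ∈ Finset.Icc 1 (p - 1), legendreSym p ((y : ℤ) ^ 3 + 2 * a ^ 2)
      = ∑ y ∈ Finset.univ.erase (0 : ZMod p), χ (y ^ 3 + 2 * A ^ 2) := by
    refine Finset.sum_nbij' (fun y => ((y : ℕ) : ZMod p)) (fun x => x.val)
      (fun y hy => ?_) (fun x hx => ?_) (fun y hy => ?_) (fun x hx => ?_) (fun y hy => ?_)
    · rw [Finset.mem_erase]
      refine ⟨?_, Finset.mem_univ _⟩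
      rw [Ne, ZMod.natCast_eq_zero_iff]
      rw [Finset.mem_Icc] at hy
      intro h
      rcases Nat.eq_zero_of_dvd_of_lt h (by omega) with h0
      omega
    · rw [Finset.mem_Icc]
      have h1 : x.val ≠ 0 := fun h => (Finset.mem_erase.1 hx).1 (by rwa [← ZMod.val_eq_zero])
      have h2 := ZMod.val_lt x
      omega
    · rw [Finset.mem_Icc] at hy
      exact ZMod.val_cast_of_lt (by omega)
    · simp
    · show _ = quadraticChar (ZMod p) _
      show quadraticChar (ZMod p) _ = _
      push_cast
      rfl
  -- Assemble
  have hL3 : legendreSym p (-3) = χ (-3) := by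
    show quadraticChar (ZMod p) _ = _
    push_cast
    rfl
  have hL6 : legendreSym p (-6) = χ (-6) := by
    show quadraticChar (ZMod p) _ = _
    push_cast
    rfl
  rw [step1, step2, step3, step4, step5, hL3, hL6, h2A]
  rw [mul_add, hm6two]
end

section
/- Let p > 3 be a prime and let a be an integer with p ∤ a. Then the number of b ∈ {0, 1, …, p − 1} with ((4b³ − 27a²)/p) = −1 equals (1/2)·( p − ((−3)/p) − ((−6)/p)·Σ_{y=1}^{p−1} ((y³ + 2a²)/p) − (2 + (p/3))·δ_p(2a²) ), where (·/p) and (p/3) are Legendre symbols and δ_p(c) = 1 if c is a cubic residue modulo p and δ_p(c) = 0 otherwise. -/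
open Finset

private lemma aux_sum_range_zmod {p : ℕ} [NeZero p] {M : Type*} [AddCommMonoid M]
    (f : ZMod p → M) :
    ∑ b ∈ Finset.range p, f (b : ZMod p) = ∑ x : ZMod p, f x := by
  refine Finset.sum_nbij' (i := fun b => (b : ZMod p)) (j := fun x => x.val) ?_ ?_ ?_ ?_ ?_
  · intro b _; exact Finset.mem_univ _
  · intro x _; exact Finset.mem_range.mpr (ZMod.val_lt x)
  · intro b hb; exact ZMod.val_cast_of_lt (Finset.mem_range.mp hb)
  · intro x _; exact ZMod.natCast_rightInverse x
  · intro b _; rfl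

private lemma aux_two_ne {p : ℕ} [hp : Fact p.Prime] (hp3 : 3 < p) : (2 : ZMod p) ≠ 0 := by
  have : ((2:ℕ) : ZMod p) ≠ 0 := by
    rw [Ne, ZMod.natCast_eq_zero_iff]
    intro h; have := Nat.le_of_dvd (by norm_num) h; omega
  simpa using this

private lemma aux_three_ne {p : ℕ} [hp : Fact p.Prime] (hp3 : 3 < p) : (3 : ZMod p) ≠ 0 := by
  have : ((3:ℕ) : ZMod p) ≠ 0 := by
    rw [Ne, ZMod.natCast_eq_zero_iff]
    intro h; have := Nat.le_of_dvd (by norm_num) h; omega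
  simpa using this

private lemma aux_pointwise {p : ℕ} [hp : Fact p.Prime] (w : ZMod p) :
    (if (quadraticChar (ZMod p) w : ℤ) = -1 then (2:ℤ) else 0)
      = 1 - (if w = 0 then (1:ℤ) else 0) - quadraticChar (ZMod p) w := by
  by_cases hw : w = 0
  · simp [hw]
  · rcases quadraticChar_dichotomy hw with h | h <;> simp [h, hw]

private lemma aux_S_transform {p : ℕ} [hp : Fact p.Prime] (hp3 : 3 < p) (A : ZMod p) :
    ∑ x : ZMod p, (quadraticChar (ZMod p) (4*x^3 - 27*A^2) : ℤ)
      = quadraticChar (ZMod p) (-6) * ∑ v : ZMod p, (quadraticChar (ZMod p) (v^3 + 2*A^2) : ℤ) := by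
  have h2 : (2 : ZMod p) ≠ 0 := aux_two_ne hp3
  have h3 : (3 : ZMod p) ≠ 0 := aux_three_ne hp3
  set k : ZMod p := (-3) * 2⁻¹ with hk
  have hkne : k ≠ 0 := by
    apply mul_ne_zero
    · simpa using h3
    · exact inv_ne_zero h2
  have hbij : Function.Bijective (fun v : ZMod p => k * v) :=
    (Equiv.mulLeft₀ k hkne).bijective
  rw [← Fintype.sum_bijective _ hbij
      (fun v => (quadraticChar (ZMod p) (4*(k*v)^3 - 27*A^2) : ℤ))
      (fun x => (quadraticChar (ZMod p) (4*x^3 - 27*A^2) : ℤ)) (fun v => rfl)]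
  have key : ∀ v : ZMod p, 4*(k*v)^3 - 27*A^2 = ((-6) * (3 * 2⁻¹)^2) * (v^3 + 2*A^2) := by
    intro v
    rw [hk]
    field_simp
    ring
  have hsq : (quadraticChar (ZMod p)) ((3 * 2⁻¹ : ZMod p)^2) = 1 :=
    quadraticChar_sq_one' (mul_ne_zero h3 (inv_ne_zero h2))
  rw [Finset.mul_sum]
  refine Finset.sum_congr rfl fun v _ => ?_
  rw [key v, map_mul, map_mul, hsq, mul_one]

private lemma aux_cube_inj {p : ℕ} [hp : Fact p.Prime] (h3 : p % 3 = 2) :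
    Function.Injective (fun z : ZMod p => z ^ 3) := by
  have hcop : (Nat.card (ZMod p)ˣ).Coprime 3 := by
    have hcard : Nat.card (ZMod p)ˣ = p - 1 := by
      rw [Nat.card_eq_fintype_card, ZMod.card_units]
    rw [hcard, Nat.coprime_comm]
    refine (Nat.Prime.coprime_iff_not_dvd (by norm_num)).mpr ?_
    have := hp.out.two_le; omega
  intro x y hxy
  simp only at hxy
  by_cases hx : x = 0
  · subst hx
    rw [eq_comm, zero_pow (by norm_num), pow_eq_zero_iff (by norm_num)] at hxy
    exact hxy.symm
  · by_cases hy : y = 0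
    · subst hy
      rw [zero_pow (by norm_num), pow_eq_zero_iff (by norm_num)] at hxy
      exact absurd hxy hx
    · lift x to (ZMod p)ˣ using isUnit_iff_ne_zero.mpr hx with u
      lift y to (ZMod p)ˣ using isUnit_iff_ne_zero.mpr hy with v
      have huv : u ^ 3 = v ^ 3 := by
        apply Units.ext; push_cast; exact hxy
      have := (powCoprime hcop).injective huv
      rw [this]

private lemma aux_cube_count_one {p : ℕ} [hp : Fact p.Prime] (hp3 : 3 < p) (h3 : p % 3 = 1)
    (c : ZMod p) (hc : c ≠ 0) :
    (Finset.univ.filter (fun z : ZMod p => z ^ 3 = c)).card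
      = if ∃ z : ZMod p, z ^ 3 = c then 3 else 0 := by
  classical
  obtain ⟨g, hg⟩ := IsCyclic.exists_generator (α := (ZMod p)ˣ)
  have hord : orderOf g = p - 1 := by
    rw [orderOf_eq_card_of_forall_mem_zpowers hg, Nat.card_eq_fintype_card, ZMod.card_units]
  have hdvd : 3 ∣ p - 1 := by omega
  set ζ : ZMod p := ((g ^ ((p - 1) / 3) : (ZMod p)ˣ) : ZMod p) with hζdef
  have h1 : orderOf ζ = 3 := by
    rw [hζdef, orderOf_units, orderOf_pow, hord, Nat.gcd_eq_right (Nat.div_dvd_of_dvd hdvd),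
      Nat.div_div_self hdvd (by omega)]
  have hζ : IsPrimitiveRoot ζ 3 := by
    have := IsPrimitiveRoot.orderOf ζ
    rwa [h1] at this
  have key : Finset.univ.filter (fun z : ZMod p => z ^ 3 = c)
      = (Polynomial.nthRoots 3 c).toFinset := by
    ext z
    simp [Polynomial.mem_nthRoots (by norm_num : 0 < 3)]
  rw [key, Multiset.toFinset_card_of_nodup (hζ.nthRoots_nodup hc), hζ.card_nthRoots c]
  congr 1

private lemma aux_cube_count_two {p : ℕ} [hp : Fact p.Prime] (h3 : p % 3 = 2) (c : ZMod p) :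
    (Finset.univ.filter (fun z : ZMod p => z ^ 3 = c)).card = 1
      ∧ ∃ z : ZMod p, z ^ 3 = c := by
  classical
  have hbij : Function.Bijective (fun z : ZMod p => z ^ 3) :=
    Finite.injective_iff_bijective.mp (aux_cube_inj h3)
  obtain ⟨z₀, hz₀⟩ := hbij.surjective c
  refine ⟨?_, z₀, hz₀⟩
  rw [Finset.card_eq_one]
  refine ⟨z₀, ?_⟩
  ext z
  simp only [Finset.mem_filter, Finset.mem_univ, true_and, Finset.mem_singleton]
  constructor
  · intro hz; exact hbij.injective (hz.trans hz₀.symm)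
  · rintro rfl; exact hz₀

private lemma aux_leg3_two {p : ℕ} (h : 3 < p) (hm : p % 3 = 2) : legendreSym 3 (p : ℤ) = -1 := by
  rw [legendreSym.mod]
  have : (p : ℤ) % ((3:ℕ):ℤ) = 2 := by push_cast; omega
  rw [this]; decide

private lemma aux_leg3_one {p : ℕ} (h : 3 < p) (hm : p % 3 = 1) : legendreSym 3 (p : ℤ) = 1 := by
  rw [legendreSym.mod]
  have : (p : ℤ) % ((3:ℕ):ℤ) = 1 := by push_cast; omega
  rw [this]; decide

private lemma aux_cube_count {p : ℕ} [hp : Fact p.Prime] (hp3 : 3 < p)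
    (c : ZMod p) (hc : c ≠ 0) :
    ((Finset.univ.filter (fun z : ZMod p => z ^ 3 = c)).card : ℤ)
      = (2 + legendreSym 3 (p : ℤ)) * (if ∃ z : ZMod p, z ^ 3 = c then (1:ℤ) else 0) := by
  classical
  have hm : p % 3 = 1 ∨ p % 3 = 2 := by
    have h0 : p % 3 ≠ 0 := by
      intro h0
      have h3d : (3:ℕ) ∣ p := Nat.dvd_of_mod_eq_zero h0
      have := (Nat.prime_dvd_prime_iff_eq (by norm_num) hp.out).mp h3d
      omega
    omega
  rcases hm with hm | hm
  · rw [aux_leg3_one hp3 hm, aux_cube_count_one hp3 hm c hc]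
    split_ifs <;> norm_num
  · obtain ⟨hcard, hex⟩ := aux_cube_count_two hm c
    rw [aux_leg3_two hp3 hm, hcard, if_pos hex]
    norm_num

theorem stmt_13 (p : ℕ) [hp : Fact p.Prime] (hp3 : 3 < p)
    (a : ℤ) (ha : ¬ (p : ℤ) ∣ a) :
    2 * ((((Finset.range p).filter (fun b : ℕ =>
        legendreSym p (4 * (b : ℤ) ^ 3 - 27 * a ^ 2) = -1)).card : ℤ))
      = (p : ℤ) - legendreSym p (-3) - legendreSym p (-6) * (∑ y ∈ Finset.Icc 1 (p - 1), legendreSym p ((y : ℤ) ^ 3 + 2 * a ^ 2))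
        - (2 + legendreSym 3 p) * (if ∃ x ∈ Finset.range p, (x : ℤ) ^ 3 ≡ 2 * a ^ 2 [ZMOD (p : ℤ)] then (1 : ℤ) else 0) := by
  classical
  have h2 : (2 : ZMod p) ≠ 0 := aux_two_ne hp3
  have h3 : (3 : ZMod p) ≠ 0 := aux_three_ne hp3
  set A : ZMod p := ((a : ℤ) : ZMod p) with hA_def
  have hA : A ≠ 0 := by
    rw [hA_def, Ne, ZMod.intCast_zmod_eq_zero_iff_dvd]; exact ha
  have hc : (2 * A ^ 2 : ZMod p) ≠ 0 :=
    mul_ne_zero h2 (pow_ne_zero 2 hA)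
  -- rewrite legendreSym applied to the casts
  have legcast : ∀ b : ℕ, legendreSym p (4 * (b : ℤ) ^ 3 - 27 * a ^ 2)
      = quadraticChar (ZMod p) (4 * ((b : ZMod p)) ^ 3 - 27 * A ^ 2) := by
    intro b
    show quadraticChar (ZMod p) (((4 * (b : ℤ) ^ 3 - 27 * a ^ 2 : ℤ)) : ZMod p) = _
    congr 1
    push_cast [hA_def]
    ring
  have legcast2 : ∀ y : ℕ, legendreSym p ((y : ℤ) ^ 3 + 2 * a ^ 2)
      = quadraticChar (ZMod p) (((y : ZMod p)) ^ 3 + 2 * A ^ 2) := by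
    intro y
    show quadraticChar (ZMod p) ((((y : ℤ) ^ 3 + 2 * a ^ 2 : ℤ)) : ZMod p) = _
    congr 1
    push_cast [hA_def]
    ring
  -- Step 1 : LHS as a sum over ZMod p
  have step1 : 2 * ((((Finset.range p).filter (fun b : ℕ =>
        legendreSym p (4 * (b : ℤ) ^ 3 - 27 * a ^ 2) = -1)).card : ℤ))
      = ∑ x : ZMod p, (if (quadraticChar (ZMod p) (4 * x ^ 3 - 27 * A ^ 2) : ℤ) = -1
          then (2:ℤ) else 0) := by
    rw [Finset.card_filter]
    push_cast
    rw [Finset.mul_sum]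
    rw [show (∑ b ∈ Finset.range p, 2 * if legendreSym p (4 * (b : ℤ) ^ 3 - 27 * a ^ 2) = -1
        then (1:ℤ) else 0)
      = ∑ b ∈ Finset.range p, (if (quadraticChar (ZMod p)
          (4 * ((b : ZMod p)) ^ 3 - 27 * A ^ 2) : ℤ) = -1 then (2:ℤ) else 0) from
      Finset.sum_congr rfl fun b _ => by rw [legcast b]; split_ifs <;> norm_num]
    exact aux_sum_range_zmod (fun x : ZMod p =>
      if (quadraticChar (ZMod p) (4 * x ^ 3 - 27 * A ^ 2) : ℤ) = -1 then (2:ℤ) else 0)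
  rw [step1]
  -- Step 2 : pointwise expansion
  have step2 : ∑ x : ZMod p, (if (quadraticChar (ZMod p) (4 * x ^ 3 - 27 * A ^ 2) : ℤ) = -1
          then (2:ℤ) else 0)
      = (p : ℤ)
        - ((Finset.univ.filter (fun x : ZMod p => 4 * x ^ 3 - 27 * A ^ 2 = 0)).card : ℤ)
        - ∑ x : ZMod p, (quadraticChar (ZMod p) (4 * x ^ 3 - 27 * A ^ 2) : ℤ) := by
    rw [show (∑ x : ZMod p, (if (quadraticChar (ZMod p) (4 * x ^ 3 - 27 * A ^ 2) : ℤ) = -1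
          then (2:ℤ) else 0))
        = ∑ x : ZMod p, ((1:ℤ) - (if 4 * x ^ 3 - 27 * A ^ 2 = 0 then (1:ℤ) else 0)
            - quadraticChar (ZMod p) (4 * x ^ 3 - 27 * A ^ 2)) from
      Finset.sum_congr rfl fun x _ => aux_pointwise _]
    rw [Finset.sum_sub_distrib, Finset.sum_sub_distrib]
    congr 1
    · congr 1
      · simp [ZMod.card]
      · rw [Finset.card_filter]
        push_cast
        rfl
  rw [step2]
  -- Step 3 : the character sum
  have step3 : ∑ x : ZMod p, (quadraticChar (ZMod p) (4 * x ^ 3 - 27 * A ^ 2) : ℤ)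
      = legendreSym p (-6) * (∑ y ∈ Finset.Icc 1 (p - 1), legendreSym p ((y : ℤ) ^ 3 + 2 * a ^ 2))
        + legendreSym p (-3) := by
    have hS := aux_S_transform hp3 A
    have hleg6 : legendreSym p (-6) = (quadraticChar (ZMod p) (-6 : ZMod p) : ℤ) := by
      show (quadraticChar (ZMod p) (((-6 : ℤ)) : ZMod p) : ℤ) = _
      norm_num
    have hleg3 : legendreSym p (-3) = (quadraticChar (ZMod p) (-3 : ZMod p) : ℤ) := by
      show (quadraticChar (ZMod p) (((-3 : ℤ)) : ZMod p) : ℤ) = _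
      norm_num
    -- decompose full sum over ZMod p
    have hrange : Finset.range p = insert 0 (Finset.Icc 1 (p - 1)) := by
      ext y
      simp only [Finset.mem_range, Finset.mem_insert, Finset.mem_Icc]
      omega
    have hU : ∑ v : ZMod p, (quadraticChar (ZMod p) (v ^ 3 + 2 * A ^ 2) : ℤ)
        = (quadraticChar (ZMod p) (2 * A ^ 2) : ℤ)
          + ∑ y ∈ Finset.Icc 1 (p - 1), legendreSym p ((y : ℤ) ^ 3 + 2 * a ^ 2) := by
      rw [← aux_sum_range_zmod (fun v : ZMod p =>
        (quadraticChar (ZMod p) (v ^ 3 + 2 * A ^ 2) : ℤ)), hrange,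
        Finset.sum_insert (by simp)]
      congr 1
      · push_cast
        norm_num
      · exact Finset.sum_congr rfl fun y _ => (legcast2 y).symm
    have hchi2 : (quadraticChar (ZMod p) (2 * A ^ 2) : ℤ) = (quadraticChar (ZMod p) (2 : ZMod p) : ℤ) := by
      rw [map_mul, quadraticChar_sq_one' hA, mul_one]
    have hm63 : (quadraticChar (ZMod p) (-6 : ZMod p) : ℤ) * (quadraticChar (ZMod p) (2 : ZMod p) : ℤ)
        = (quadraticChar (ZMod p) (-3 : ZMod p) : ℤ) := by
      have : (-6 : ZMod p) * 2 = (-3) * 2 ^ 2 := by ring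
      rw [← map_mul, this, map_mul, quadraticChar_sq_one' h2, mul_one]
    rw [hS, hU, hleg6, hleg3, mul_add, hchi2, hm63]
    ring
  rw [step3]
  -- Step 4 : the zero-count
  have step4 : ((Finset.univ.filter (fun x : ZMod p => 4 * x ^ 3 - 27 * A ^ 2 = 0)).card : ℤ)
      = (2 + legendreSym 3 p) * (if ∃ x ∈ Finset.range p,
          (x : ℤ) ^ 3 ≡ 2 * a ^ 2 [ZMOD (p : ℤ)] then (1 : ℤ) else 0) := by
    have hbijcard : (Finset.univ.filter (fun x : ZMod p => 4 * x ^ 3 - 27 * A ^ 2 = 0)).card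
        = (Finset.univ.filter (fun z : ZMod p => z ^ 3 = 2 * A ^ 2)).card := by
      refine Finset.card_bij' (fun x _ => (2 * 3⁻¹ : ZMod p) * x)
        (fun z _ => (3 * 2⁻¹ : ZMod p) * z) ?_ ?_ ?_ ?_
      · intro x hx
        simp only [Finset.mem_filter, Finset.mem_univ, true_and] at hx ⊢
        have h4 : 4 * x ^ 3 = 27 * A ^ 2 := sub_eq_zero.mp hx
        field_simp
        linear_combination h4
      · intro z hz
        simp only [Finset.mem_filter, Finset.mem_univ, true_and] at hz ⊢
        rw [sub_eq_zero]
        field_simp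
        linear_combination (27 : ZMod p) * 4 * hz
      · intro x _
        field_simp
      · intro z _
        field_simp
    have hdelta : (∃ x ∈ Finset.range p, (x : ℤ) ^ 3 ≡ 2 * a ^ 2 [ZMOD (p : ℤ)])
        ↔ ∃ z : ZMod p, z ^ 3 = 2 * A ^ 2 := by
      constructor
      · rintro ⟨x, -, hx⟩
        refine ⟨((x : ℕ) : ZMod p), ?_⟩
        have h := (ZMod.intCast_eq_intCast_iff _ _ _).mpr hx
        push_cast [hA_def] at h ⊢
        convert h using 2
      · rintro ⟨z, hz⟩
        refine ⟨z.val, Finset.mem_range.mpr (ZMod.val_lt z), ?_⟩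
        rw [← ZMod.intCast_eq_intCast_iff]
        have hzv : ((z.val : ℕ) : ZMod p) = z := ZMod.natCast_rightInverse z
        push_cast [hA_def] at hz ⊢
        rw [hzv]
        exact hz
    rw [hbijcard, aux_cube_count hp3 _ hc]
    congr 1
    rw [if_congr hdelta.symm rfl rfl]
  rw [step4]
  ring
end

section
/- Let p > 3 be a prime and let a be an integer with p ∤ a. Then the number of pairs (x, y) with x, y ∈ {0, 1, …, p − 1} and y³ ≡ 2a²(x² − 1) (mod p) equals p + 1 + (2/p)·Σ_{y=1}^{p−1} ((y³ + 2a²)/p), where (·/p) is the Legendre symbol. -/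
theorem stmt_14 (p : ℕ) [hp : Fact p.Prime] (hp3 : 3 < p)
    (a : ℤ) (ha : ¬ (p : ℤ) ∣ a) :
    ((((Finset.range p) ×ˢ (Finset.range p)).filter (fun q : ℕ × ℕ =>
        (q.2 : ℤ) ^ 3 ≡ 2 * a ^ 2 * ((q.1 : ℤ) ^ 2 - 1) [ZMOD (p : ℤ)])).card : ℤ)
      = (p : ℤ) + 1 + legendreSym p 2 * (∑ y ∈ Finset.Icc 1 (p - 1), legendreSym p ((y : ℤ) ^ 3 + 2 * a ^ 2)) := by
  have hp' := hp.out
  have hp0 : 0 < p := by omega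
  have hp2 : p ≠ 2 := by omega
  set A : ZMod p := (a : ZMod p) with hA
  set χ := quadraticChar (ZMod p) with hχ
  have hA0 : A ≠ 0 := by
    rw [hA, Ne, ZMod.intCast_zmod_eq_zero_iff_dvd]; exact ha
  have h2 : (2 : ZMod p) ≠ 0 := by
    have : ¬ ((p : ℤ) ∣ (2 : ℤ)) := by
      intro h
      have := Int.le_of_dvd (by norm_num) h
      omega
    have h2' : ((2 : ℤ) : ZMod p) ≠ 0 := by
      rw [Ne, ZMod.intCast_zmod_eq_zero_iff_dvd]; exact this
    simpa using h2'
  have h2A : (2 * A ^ 2 : ZMod p) ≠ 0 := mul_ne_zero h2 (pow_ne_zero _ hA0)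
  have hchar : ringChar (ZMod p) ≠ 2 := by
    rw [ZMod.ringChar_zmod_n]; exact hp2
  -- predicate equivalence
  have key : ∀ x y : ℕ, ((y : ℤ) ^ 3 ≡ 2 * a ^ 2 * ((x : ℤ) ^ 2 - 1) [ZMOD (p : ℤ)]) ↔
      ((y : ZMod p) ^ 3 = 2 * A ^ 2 * ((x : ZMod p) ^ 2 - 1)) := by
    intro x y
    rw [← ZMod.intCast_eq_intCast_iff]
    push_cast
    rfl
  -- step 1: transfer to ZMod p
  have hcard : (((Finset.range p) ×ˢ (Finset.range p)).filter (fun q : ℕ × ℕ =>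
        (q.2 : ℤ) ^ 3 ≡ 2 * a ^ 2 * ((q.1 : ℤ) ^ 2 - 1) [ZMOD (p : ℤ)])).card
      = (Finset.univ.filter (fun q : ZMod p × ZMod p =>
          q.2 ^ 3 = 2 * A ^ 2 * (q.1 ^ 2 - 1))).card := by
    apply Finset.card_nbij (fun q : ℕ × ℕ => ((q.1 : ZMod p), (q.2 : ZMod p)))
    · intro q hq
      simp only [Finset.mem_coe, Finset.mem_filter, Finset.mem_product, Finset.mem_range] at hq ⊢
      exact ⟨Finset.mem_univ _, (key q.1 q.2).mp hq.2⟩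
    · intro q hq q' hq' h
      simp only [Finset.coe_filter, Set.mem_setOf_eq, Finset.mem_product, Finset.mem_range] at hq hq'
      have h1 : (q.1 : ZMod p) = q'.1 := congrArg Prod.fst h
      have h2' : (q.2 : ZMod p) = q'.2 := congrArg Prod.snd h
      have e1 : q.1 = q'.1 := by
        have := congrArg ZMod.val h1
        rwa [ZMod.val_natCast_of_lt hq.1.1, ZMod.val_natCast_of_lt hq'.1.1] at this
      have e2 : q.2 = q'.2 := by
        have := congrArg ZMod.val h2'
        rwa [ZMod.val_natCast_of_lt hq.1.2, ZMod.val_natCast_of_lt hq'.1.2] at this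
      exact Prod.ext e1 e2
    · intro q hq
      simp only [Finset.coe_filter, Set.mem_setOf_eq, Finset.mem_univ, true_and] at hq
      refine ⟨(q.1.val, q.2.val), ?_, ?_⟩
      · simp only [Finset.mem_coe, Finset.mem_filter, Finset.mem_product, Finset.mem_range]
        refine ⟨⟨ZMod.val_lt _, ZMod.val_lt _⟩, ?_⟩
        rw [key]
        simpa [ZMod.natCast_val, ZMod.cast_id] using hq
      · simp [ZMod.natCast_val, ZMod.cast_id]
  -- equivalence of conditions
  have hequiv : ∀ x y : ZMod p, (y ^ 3 = 2 * A ^ 2 * (x ^ 2 - 1)) ↔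
      x ^ 2 = (y ^ 3 + 2 * A ^ 2) * (2 * A ^ 2)⁻¹ := by
    intro x y
    rw [eq_mul_inv_iff_mul_eq₀ h2A]
    constructor <;> intro h <;> linear_combination -h
  -- fiber count
  have hfiber : ∀ y : ZMod p, ((Finset.univ.filter (fun x : ZMod p =>
      x ^ 2 = (y ^ 3 + 2 * A ^ 2) * (2 * A ^ 2)⁻¹)).card : ℤ)
      = χ ((y ^ 3 + 2 * A ^ 2) * (2 * A ^ 2)⁻¹) + 1 := by
    intro y
    rw [← Set.toFinset_setOf]
    exact quadraticChar_card_sqrts hchar _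
  -- fiberwise decomposition
  have hsum : (Finset.univ.filter (fun q : ZMod p × ZMod p =>
      q.2 ^ 3 = 2 * A ^ 2 * (q.1 ^ 2 - 1))).card
      = ∑ y : ZMod p, (Finset.univ.filter (fun x : ZMod p =>
          x ^ 2 = (y ^ 3 + 2 * A ^ 2) * (2 * A ^ 2)⁻¹)).card := by
    rw [Finset.card_eq_sum_card_fiberwise (f := Prod.snd) (t := Finset.univ)
      (fun _ _ => Finset.mem_univ _)]
    refine Finset.sum_congr rfl fun y _ => ?_
    apply Finset.card_nbij' (fun q : ZMod p × ZMod p => q.1) (fun x : ZMod p => (x, y))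
    · intro q hq
      simp only [Finset.mem_coe, Finset.mem_filter, Finset.mem_univ, true_and] at hq ⊢
      rw [← hq.2]
      exact (hequiv q.1 q.2).mp hq.1
    · intro x hx
      simp only [Finset.mem_coe, Finset.mem_filter, Finset.mem_univ, true_and] at hx ⊢
      exact ⟨(hequiv x y).mpr hx, trivial⟩
    · intro q hq
      simp only [Finset.mem_coe, Finset.mem_filter, Finset.mem_univ, true_and] at hq
      exact Prod.ext rfl hq.2.symm
    · intro x _
      rfl
  -- character manipulations
  have hdich2 : χ 2 = 1 ∨ χ 2 = -1 := quadraticChar_dichotomy h2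
  have h2Achi : χ (2 * A ^ 2) = χ 2 := by
    rw [map_mul, quadraticChar_sq_one' hA0, mul_one]
  have hinv : χ ((2 * A ^ 2)⁻¹) = χ 2 := by
    have h1 : χ ((2 * A ^ 2)⁻¹) * χ (2 * A ^ 2) = 1 := by
      rw [← map_mul, inv_mul_cancel₀ h2A, map_one]
    rw [h2Achi] at h1
    rcases hdich2 with h | h <;> rw [h] at h1 ⊢ <;> linarith
  have hchi : ∀ y : ZMod p, χ ((y ^ 3 + 2 * A ^ 2) * (2 * A ^ 2)⁻¹)
      = χ 2 * χ (y ^ 3 + 2 * A ^ 2) := by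
    intro y
    rw [map_mul, hinv, mul_comm]
  -- split off y = 0 and reindex
  have hleg : ∀ y : ℕ, (legendreSym p ((y : ℤ) ^ 3 + 2 * a ^ 2)) = χ ((y : ZMod p) ^ 3 + 2 * A ^ 2) := by
    intro y
    show χ ((((y : ℤ) ^ 3 + 2 * a ^ 2 : ℤ)) : ZMod p) = _
    push_cast
    rfl
  have hleg2 : legendreSym p 2 = χ 2 := by
    show χ (((2 : ℤ)) : ZMod p) = χ 2
    norm_num
  have hsplit : ∑ y : ZMod p, χ (y ^ 3 + 2 * A ^ 2)
      = χ 2 + ∑ y ∈ Finset.Icc 1 (p - 1), legendreSym p ((y : ℤ) ^ 3 + 2 * a ^ 2) := by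
    rw [← Finset.add_sum_erase _ _ (Finset.mem_univ (0 : ZMod p))]
    congr 1
    · rw [zero_pow (by norm_num), zero_add, h2Achi]
    · refine (Finset.sum_nbij (fun y : ℕ => (y : ZMod p)) ?_ ?_ ?_ ?_).symm
      · intro y hy
        simp only [Finset.mem_Icc] at hy
        simp only [Finset.mem_erase, Finset.mem_univ, and_true]
        rw [Ne, ZMod.natCast_eq_zero_iff]
        intro hd
        have := Nat.le_of_dvd (by omega) hd
        omega
      · intro y hy y' hy' h
        simp only [Finset.coe_Icc, Set.mem_Icc] at hy hy'
        have := congrArg ZMod.val h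
        rwa [ZMod.val_natCast_of_lt (by omega), ZMod.val_natCast_of_lt (by omega)] at this
      · intro u hu
        simp only [Finset.coe_erase, Set.mem_diff, Finset.coe_univ, Set.mem_univ,
          Set.mem_singleton_iff, true_and] at hu
        refine ⟨u.val, ?_, ?_⟩
        · simp only [Finset.mem_coe, Finset.mem_Icc]
          have hv : u.val ≠ 0 := fun h => hu (by rwa [← ZMod.val_eq_zero])
          have := ZMod.val_lt u
          omega
        · simp [ZMod.natCast_val, ZMod.cast_id]
      · intro y _
        rw [hleg]
  -- assemble
  have hcardu : (Finset.univ : Finset (ZMod p)).card = p := by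
    simp [ZMod.card]
  calc ((((Finset.range p) ×ˢ (Finset.range p)).filter (fun q : ℕ × ℕ =>
        (q.2 : ℤ) ^ 3 ≡ 2 * a ^ 2 * ((q.1 : ℤ) ^ 2 - 1) [ZMOD (p : ℤ)])).card : ℤ)
      = ∑ y : ZMod p, (χ ((y ^ 3 + 2 * A ^ 2) * (2 * A ^ 2)⁻¹) + 1) := by
        rw [hcard, hsum]
        push_cast
        exact Finset.sum_congr rfl fun y _ => hfiber y
    _ = χ 2 * ∑ y : ZMod p, χ (y ^ 3 + 2 * A ^ 2) + p := by
        rw [Finset.sum_add_distrib, Finset.sum_const, hcardu, Finset.mul_sum]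
        simp only [nsmul_eq_mul, mul_one]
        congr 1
        exact Finset.sum_congr rfl fun y _ => hchi y
    _ = (p : ℤ) + 1 + legendreSym p 2 * (∑ y ∈ Finset.Icc 1 (p - 1),
          legendreSym p ((y : ℤ) ^ 3 + 2 * a ^ 2)) := by
        rw [hsplit, hleg2]
        have hsq : χ 2 * χ 2 = 1 := by rcases hdich2 with h | h <;> rw [h] <;> norm_num
        rw [mul_add, hsq]
        ring
end

section
/- Let p > 3 be a prime and let a be an integer with p ∤ a. Then V_p(x + a/(2x²)) = V_p(x² + 2/(ax)); that is, the number of residues b ∈ {0, …, p − 1} such that x + a·(2x²)⁻¹ ≡ b (mod p) has a solution x ∈ {1, …, p − 1} equals the number of residues b ∈ {0, …, p − 1} such that x² + 2·(ax)⁻¹ ≡ b (mod p) has a solution x ∈ {1, …, p − 1}. -/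
/-- Transfer the first counting condition to `ZMod p`. -/
lemma stmt16_key1 (p : ℕ) (hp : p.Prime) (a : ℤ) (b : ℤ) :
    (∃ x ∈ Finset.Icc 1 (p - 1),
        2 * (x : ℤ) ^ 3 + a ≡ 2 * b * (x : ℤ) ^ 2 [ZMOD (p : ℤ)]) ↔
      ∃ u : ZMod p, u ≠ 0 ∧ 2 * u ^ 3 + (a : ZMod p) = 2 * (b : ZMod p) * u ^ 2 := by
  haveI : Fact p.Prime := ⟨hp⟩
  have hp2 : 2 ≤ p := hp.two_le
  constructor
  · rintro ⟨x, hx, h⟩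
    simp only [Finset.mem_Icc] at hx
    refine ⟨((x : ℤ) : ZMod p), ?_, ?_⟩
    · intro h0
      have hd : (p : ℤ) ∣ (x : ℤ) := (ZMod.intCast_zmod_eq_zero_iff_dvd _ p).mp h0
      have hd' : p ∣ x := by exact_mod_cast hd
      have := Nat.le_of_dvd (by omega) hd'
      omega
    · have h' := (ZMod.intCast_eq_intCast_iff _ _ _).mpr h
      push_cast at h' ⊢
      linear_combination h'
  · rintro ⟨u, hu, h⟩
    refine ⟨u.val, ?_, ?_⟩
    · simp only [Finset.mem_Icc]
      have h1 : u.val ≠ 0 := by simpa [ZMod.val_eq_zero] using hu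
      have h2 : u.val < p := ZMod.val_lt u
      omega
    · apply (ZMod.intCast_eq_intCast_iff _ _ _).mp
      push_cast
      rw [ZMod.natCast_val, ZMod.cast_id]
      linear_combination h

/-- Transfer the second counting condition to `ZMod p`. -/
lemma stmt16_key2 (p : ℕ) (hp : p.Prime) (a : ℤ) (b : ℤ) :
    (∃ x ∈ Finset.Icc 1 (p - 1),
        a * (x : ℤ) ^ 3 + 2 ≡ a * b * (x : ℤ) [ZMOD (p : ℤ)]) ↔
      ∃ u : ZMod p, u ≠ 0 ∧ (a : ZMod p) * u ^ 3 + 2 = (a : ZMod p) * (b : ZMod p) * u := by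
  haveI : Fact p.Prime := ⟨hp⟩
  have hp2 : 2 ≤ p := hp.two_le
  constructor
  · rintro ⟨x, hx, h⟩
    simp only [Finset.mem_Icc] at hx
    refine ⟨((x : ℤ) : ZMod p), ?_, ?_⟩
    · intro h0
      have hd : (p : ℤ) ∣ (x : ℤ) := (ZMod.intCast_zmod_eq_zero_iff_dvd _ p).mp h0
      have hd' : p ∣ x := by exact_mod_cast hd
      have := Nat.le_of_dvd (by omega) hd'
      omega
    · have h' := (ZMod.intCast_eq_intCast_iff _ _ _).mpr h
      push_cast at h' ⊢
      linear_combination h'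
  · rintro ⟨u, hu, h⟩
    refine ⟨u.val, ?_, ?_⟩
    · simp only [Finset.mem_Icc]
      have h1 : u.val ≠ 0 := by simpa [ZMod.val_eq_zero] using hu
      have h2 : u.val < p := ZMod.val_lt u
      omega
    · apply (ZMod.intCast_eq_intCast_iff _ _ _).mp
      push_cast
      rw [ZMod.natCast_val, ZMod.cast_id]
      linear_combination h

theorem stmt_16 (p : ℕ) (hp : p.Prime) (hp3 : 3 < p)
    (a : ℤ) (ha : ¬ (p : ℤ) ∣ a) :
    (((Finset.range p).filter (fun b : ℕ =>
      ∃ x ∈ Finset.Icc 1 (p - 1),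
        2 * (x : ℤ) ^ 3 + (a) ≡ 2 * (b : ℤ) * (x : ℤ) ^ 2 [ZMOD (p : ℤ)])).card : ℤ) = (((Finset.range p).filter (fun b : ℕ =>
      ∃ x ∈ Finset.Icc 1 (p - 1),
        (a) * (x : ℤ) ^ 3 + 2 ≡ (a) * (b : ℤ) * (x : ℤ) [ZMOD (p : ℤ)])).card : ℤ) := by
  haveI : Fact p.Prime := ⟨hp⟩
  have h2 : (2 : ZMod p) ≠ 0 := by
    intro h
    have h2' : ((2 : ℕ) : ZMod p) = 0 := by exact_mod_cast h
    have hd := (ZMod.natCast_eq_zero_iff 2 p).mp h2'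
    have := Nat.le_of_dvd (by norm_num) hd
    omega
  have hA : (a : ZMod p) ≠ 0 := fun h => ha ((ZMod.intCast_zmod_eq_zero_iff_dvd a p).mp h)
  -- the crucial equivalence between the two ZMod conditions
  have equiv : ∀ c : ZMod p,
      (∃ u : ZMod p, u ≠ 0 ∧ 2 * u ^ 3 + (a : ZMod p) = 2 * c * u ^ 2) ↔
      (∃ u : ZMod p, u ≠ 0 ∧
        (a : ZMod p) * u ^ 3 + 2 = (a : ZMod p) * (2 * (a : ZMod p)⁻¹ * c) * u) := by
    intro c
    have hac : (a : ZMod p) * (2 * (a : ZMod p)⁻¹ * c) = 2 * c := by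
      field_simp
    rw [hac]
    constructor
    · rintro ⟨u, hu, h⟩
      refine ⟨u⁻¹, inv_ne_zero hu, ?_⟩
      field_simp
      linear_combination h
    · rintro ⟨u, hu, h⟩
      refine ⟨u⁻¹, inv_ne_zero hu, ?_⟩
      field_simp at h ⊢
      linear_combination h
  have hval : ∀ z : ZMod p, (((z.val : ℕ) : ℤ) : ZMod p) = z := by
    intro z
    push_cast
    rw [ZMod.natCast_val, ZMod.cast_id]
  suffices hcard : ((Finset.range p).filter (fun b : ℕ =>
      ∃ x ∈ Finset.Icc 1 (p - 1),
        2 * (x : ℤ) ^ 3 + (a) ≡ 2 * (b : ℤ) * (x : ℤ) ^ 2 [ZMOD (p : ℤ)])).card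
      = ((Finset.range p).filter (fun b : ℕ =>
      ∃ x ∈ Finset.Icc 1 (p - 1),
        (a) * (x : ℤ) ^ 3 + 2 ≡ (a) * (b : ℤ) * (x : ℤ) [ZMOD (p : ℤ)])).card by
    exact_mod_cast hcard
  refine Finset.card_bij'
    (fun b _ => (2 * (a : ZMod p)⁻¹ * ((b : ℤ) : ZMod p)).val)
    (fun b _ => (2⁻¹ * (a : ZMod p) * ((b : ℤ) : ZMod p)).val) ?_ ?_ ?_ ?_
  · -- hi
    intro b hb
    simp only [Finset.mem_filter, Finset.mem_range] at hb ⊢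
    obtain ⟨hblt, hP⟩ := hb
    refine ⟨ZMod.val_lt _, ?_⟩
    rw [stmt16_key2 p hp, hval]
    exact (equiv (((b : ℤ)) : ZMod p)).mp ((stmt16_key1 p hp a b).mp hP)
  · -- hj
    intro b hb
    simp only [Finset.mem_filter, Finset.mem_range] at hb ⊢
    obtain ⟨hblt, hP⟩ := hb
    refine ⟨ZMod.val_lt _, ?_⟩
    rw [stmt16_key1 p hp, hval]
    rw [equiv]
    have hsimp : 2 * (a : ZMod p)⁻¹ * (2⁻¹ * (a : ZMod p) * ((b : ℤ) : ZMod p))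
        = ((b : ℤ) : ZMod p) := by
      field_simp
    rw [hsimp]
    exact (stmt16_key2 p hp a b).mp hP
  · -- left inverse
    intro b hb
    simp only [Finset.mem_filter, Finset.mem_range] at hb
    have : (((2 * (a : ZMod p)⁻¹ * ((b : ℤ) : ZMod p)).val : ℤ) : ZMod p)
        = 2 * (a : ZMod p)⁻¹ * ((b : ℤ) : ZMod p) := hval _
    rw [this]
    have hsimp : 2⁻¹ * (a : ZMod p) * (2 * (a : ZMod p)⁻¹ * ((b : ℤ) : ZMod p))
        = ((b : ℤ) : ZMod p) := by
      field_simp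
    rw [hsimp]
    have : ((b : ℤ) : ZMod p) = ((b : ℕ) : ZMod p) := by push_cast; rfl
    rw [this, ZMod.val_cast_of_lt hb.1]
  · -- right inverse
    intro b hb
    simp only [Finset.mem_filter, Finset.mem_range] at hb
    have : (((2⁻¹ * (a : ZMod p) * ((b : ℤ) : ZMod p)).val : ℤ) : ZMod p)
        = 2⁻¹ * (a : ZMod p) * ((b : ℤ) : ZMod p) := hval _
    rw [this]
    have hsimp : 2 * (a : ZMod p)⁻¹ * (2⁻¹ * (a : ZMod p) * ((b : ℤ) : ZMod p))
        = ((b : ℤ) : ZMod p) := by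
      field_simp
    rw [hsimp]
    have : ((b : ℤ) : ZMod p) = ((b : ℕ) : ZMod p) := by push_cast; rfl
    rw [this, ZMod.val_cast_of_lt hb.1]
end

section
/- Let p > 3 be a prime and let c be an integer with c² + 3 ≢ 0 (mod p). If the congruence x³ − 9x − 3c(x² − 1) ≡ 0 (mod p) has a solution, then it has exactly three distinct solutions modulo p. -/
theorem stmt_18 (p : ℕ) (hp : p.Prime) (hp3 : 3 < p)
    (c : ℤ) (hc : ¬ (p : ℤ) ∣ (c ^ 2 + 3))
    (hsol : ∃ x : ℤ, x ^ 3 - 9 * x - 3 * c * (x ^ 2 - 1) ≡ 0 [ZMOD (p : ℤ)]) :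
    ((Finset.range p).filter (fun x : ℕ =>
      (x : ℤ) ^ 3 - 9 * (x : ℤ) - 3 * c * ((x : ℤ) ^ 2 - 1) ≡ 0 [ZMOD (p : ℤ)])).card = 3 := by
  haveI : Fact p.Prime := ⟨hp⟩
  haveI : NeZero p := ⟨hp.ne_zero⟩
  set C : ZMod p := (c : ZMod p) with hC
  have h2 : (2 : ZMod p) ≠ 0 := by
    intro h
    have h' := (ZMod.natCast_eq_zero_iff 2 p).mp (by exact_mod_cast h)
    have := Nat.le_of_dvd (by norm_num) h'
    omega
  have h3 : (3 : ZMod p) ≠ 0 := by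
    intro h
    have h' := (ZMod.natCast_eq_zero_iff 3 p).mp (by exact_mod_cast h)
    have := Nat.le_of_dvd (by norm_num) h'
    omega
  have h6 : (6 : ZMod p) ≠ 0 := by
    have e : (6 : ZMod p) = 2 * 3 := by norm_num
    rw [e]; exact mul_ne_zero h2 h3
  have hC3 : C ^ 2 + 3 ≠ 0 := by
    intro h
    apply hc
    rw [← ZMod.intCast_zmod_eq_zero_iff_dvd]
    push_cast
    rw [← hC]
    exact h
  obtain ⟨x0, hx0⟩ := hsol
  -- condition translation
  have hcond : ∀ x : ℤ, (x ^ 3 - 9 * x - 3 * c * (x ^ 2 - 1) ≡ 0 [ZMOD (p : ℤ)]) ↔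
      ((x : ZMod p) ^ 3 - 3 * C * (x : ZMod p) ^ 2 - 9 * (x : ZMod p) + 3 * C = 0) := by
    intro x
    rw [Int.modEq_zero_iff_dvd, ← ZMod.intCast_zmod_eq_zero_iff_dvd]
    push_cast
    rw [← hC]
    constructor <;> intro h <;> linear_combination h
  set r : ZMod p := ((x0 : ℤ) : ZMod p) with hr
  have hfr : r ^ 3 - 3 * C * r ^ 2 - 9 * r + 3 * C = 0 := (hcond x0).mp hx0
  set u : ZMod p := r ^ 2 - 2 * C * r - 3 with hu
  have key : (-3 * r ^ 2 + 6 * C * r + 9 * C ^ 2 + 36) * u ^ 2 = 36 * (C ^ 2 + 3) ^ 2 := by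
    rw [hu]
    linear_combination (-3 * r ^ 3 + 9 * C * r ^ 2 + 27 * r - 45 * C - 12 * C ^ 3) * hfr
  have hu0 : u ≠ 0 := by
    intro h
    rw [h] at key
    have : (36 : ZMod p) * (C ^ 2 + 3) ^ 2 ≠ 0 := by
      apply mul_ne_zero _ (pow_ne_zero _ hC3)
      have e : (36 : ZMod p) = 6 * 6 := by norm_num
      rw [e]; exact mul_ne_zero h6 h6
    apply this
    rw [← key]; ring
  set s : ZMod p := 6 * (C ^ 2 + 3) / u with hs
  have hsu : s * u = 6 * (C ^ 2 + 3) := div_mul_cancel₀ _ hu0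
  have hs2 : s ^ 2 = -3 * r ^ 2 + 6 * C * r + 9 * C ^ 2 + 36 := by
    apply mul_right_cancel₀ (pow_ne_zero 2 hu0)
    calc s ^ 2 * u ^ 2 = (s * u) ^ 2 := by ring
      _ = 36 * (C ^ 2 + 3) ^ 2 := by rw [hsu]; ring
      _ = _ := key.symm
  have hs0 : s ≠ 0 := by
    intro h
    have := hsu
    rw [h, zero_mul] at this
    exact mul_ne_zero h6 hC3 this.symm
  set r2 : ZMod p := (3 * C - r + s) / 2 with hr2
  set r3 : ZMod p := (3 * C - r - s) / 2 with hr3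
  have h2r2 : (2 : ZMod p) * r2 = 3 * C - r + s := by
    rw [hr2, mul_div_cancel₀ _ h2]
  have h2r3 : (2 : ZMod p) * r3 = 3 * C - r - s := by
    rw [hr3, mul_div_cancel₀ _ h2]
  have h4 : (4 : ZMod p) ≠ 0 := by
    have e : (4 : ZMod p) = 2 * 2 := by norm_num
    rw [e]; exact mul_ne_zero h2 h2
  -- quadratic values
  have hg2 : r2 ^ 2 + (r - 3 * C) * r2 + (r ^ 2 - 3 * C * r - 9) = 0 := by
    apply mul_left_cancel₀ h4
    rw [mul_zero]
    linear_combination (2 * r2 + (3 * C - r + s) + 2 * (r - 3 * C)) * h2r2 + hs2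
  have hg3 : r3 ^ 2 + (r - 3 * C) * r3 + (r ^ 2 - 3 * C * r - 9) = 0 := by
    apply mul_left_cancel₀ h4
    rw [mul_zero]
    linear_combination (2 * r3 + (3 * C - r - s) + 2 * (r - 3 * C)) * h2r3 + hs2
  have hgr : r ^ 2 + (r - 3 * C) * r + (r ^ 2 - 3 * C * r - 9) = 3 * u := by
    rw [hu]; ring
  -- distinctness
  have hne23 : r2 ≠ r3 := by
    intro h
    apply hs0
    have e : (2 : ZMod p) * r2 = 2 * r3 := by rw [h]
    rw [h2r2, h2r3] at e
    have e2 : (2 : ZMod p) * s = 0 := by linear_combination e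
    rcases mul_eq_zero.mp e2 with h' | h'
    · exact absurd h' h2
    · exact h'
  have hne12 : r ≠ r2 := by
    intro h
    rw [← h] at hg2
    rw [hgr] at hg2
    exact mul_ne_zero h3 hu0 hg2
  have hne13 : r ≠ r3 := by
    intro h
    rw [← h] at hg3
    rw [hgr] at hg3
    exact mul_ne_zero h3 hu0 hg3
  -- root characterization
  have hroot : ∀ y : ZMod p, (y ^ 3 - 3 * C * y ^ 2 - 9 * y + 3 * C = 0) ↔
      (y = r ∨ y = r2 ∨ y = r3) := by
    intro y
    constructor
    · intro hy
      have hfac : (y - r) * (y ^ 2 + (r - 3 * C) * y + (r ^ 2 - 3 * C * r - 9)) = 0 := by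
        linear_combination hy - hfr
      rcases mul_eq_zero.mp hfac with h' | h'
      · left; exact sub_eq_zero.mp h'
      · right
        have hfac2 : (2 * y - (3 * C - r + s)) * (2 * y - (3 * C - r - s)) = 0 := by
          linear_combination 4 * h' - hs2
        rcases mul_eq_zero.mp hfac2 with h'' | h''
        · left
          apply mul_left_cancel₀ h2
          rw [h2r2]
          linear_combination h''
        · right
          apply mul_left_cancel₀ h2
          rw [h2r3]
          linear_combination h''
    · rintro (rfl | rfl | rfl)
      · exact hfr
      · linear_combination (r2 - r) * hg2 + hfr
      · linear_combination (r3 - r) * hg3 + hfr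
  -- value injectivity
  have hval_inj : Function.Injective (ZMod.val : ZMod p → ℕ) := by
    intro a b h
    have : ((a.val : ℕ) : ZMod p) = ((b.val : ℕ) : ZMod p) := by rw [h]
    rwa [ZMod.natCast_val, ZMod.natCast_val, ZMod.cast_id, ZMod.cast_id] at this
  have hset : ((Finset.range p).filter (fun x : ℕ =>
      (x : ℤ) ^ 3 - 9 * (x : ℤ) - 3 * c * ((x : ℤ) ^ 2 - 1) ≡ 0 [ZMOD (p : ℤ)])) =
      Finset.image ZMod.val ({r, r2, r3} : Finset (ZMod p)) := by
    ext x
    simp only [Finset.mem_filter, Finset.mem_range, Finset.mem_image, Finset.mem_insert,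
      Finset.mem_singleton]
    constructor
    · rintro ⟨hx, hmod⟩
      refine ⟨(x : ZMod p), ?_, ZMod.val_cast_of_lt hx⟩
      apply (hroot _).mp
      have := (hcond (x : ℤ)).mp hmod
      rwa [Int.cast_natCast] at this
    · rintro ⟨y, hy, rfl⟩
      refine ⟨ZMod.val_lt y, ?_⟩
      apply (hcond (y.val : ℤ)).mpr
      have e : (((y.val : ℤ) : ZMod p)) = y := by
        push_cast
        rw [ZMod.natCast_val, ZMod.cast_id]
      rw [e]
      exact (hroot y).mpr hy
  rw [hset, Finset.card_image_of_injective _ hval_inj]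
  rw [Finset.card_insert_of_notMem (by simp [hne12.symm, hne13.symm] at *; tauto),
    Finset.card_insert_of_notMem (by simp [hne23]), Finset.card_singleton]
end

section
/- Let p > 3 be a prime and let a be an integer with p ∤ a. Then the number of b ∈ {0, 1, …, p − 1} such that ((4b³ − 27a²)/p) = −1 and x² + a·x⁻¹ ≡ b (mod p) has a solution x ∈ {1, …, p − 1} equals (1/2)·( p − (p/3) − ((−6)/p)·Σ_{y=1}^{p−1} ((y³ + 2a²)/p) − (2 + (p/3))·δ_p(2a²) ). -/
open Finset

section S19

variable {p : ℕ} [hp : Fact p.Prime]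

private lemma s19_nat_ne (hp3 : 3 < p) {m : ℕ} (hm : 0 < m) (hmp : m < p) :
    ((m : ℕ) : ZMod p) ≠ 0 := by
  rw [Ne, ZMod.natCast_eq_zero_iff]
  intro h
  have := Nat.le_of_dvd hm h
  omega

private lemma s19_two_ne (hp3 : 3 < p) : (2 : ZMod p) ≠ 0 := by
  have := s19_nat_ne (p := p) hp3 (m := 2) (by norm_num) (by omega)
  simpa using this

private lemma s19_three_ne (hp3 : 3 < p) : (3 : ZMod p) ≠ 0 := by
  have := s19_nat_ne (p := p) hp3 (m := 3) (by norm_num) (by omega)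
  simpa using this

private lemma s19_four_ne (hp3 : 3 < p) : (4 : ZMod p) ≠ 0 := by
  have h2 := s19_two_ne (p := p) hp3
  have : (4 : ZMod p) = 2 * 2 := by norm_num
  rw [this]
  exact mul_ne_zero h2 h2

end S19
section S19b

variable {p : ℕ} [hp : Fact p.Prime]

private lemma s19_pmod3 (hp3 : 3 < p) : p % 3 = 1 ∨ p % 3 = 2 := by
  have h3 : p % 3 ≠ 0 := by
    intro h
    have : (3 : ℕ) ∣ p := Nat.dvd_of_mod_eq_zero h
    rcases Nat.Prime.eq_one_or_self_of_dvd hp.out 3 this with h | h <;> omega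
  omega

/-- If there is a nontrivial cube root of unity, then `p % 3 = 1`. -/
private lemma s19_omega_imp (hp3 : 3 < p) {ω : ZMod p} (h1 : ω ≠ 1) (h3 : ω ^ 3 = 1) :
    p % 3 = 1 := by
  have hω0 : ω ≠ 0 := by
    intro h; rw [h] at h3; simp at h3
  have hunit : ω * ω ^ 2 = 1 := by rw [← pow_succ']; exact h3
  set u : (ZMod p)ˣ := ⟨ω, ω ^ 2, hunit, by rw [mul_comm] at hunit; exact hunit⟩ with hu
  have hu3 : u ^ 3 = 1 := by
    ext; push_cast [hu]; exact h3
  have hne : u ≠ 1 := by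
    intro h
    apply h1
    have : (u : ZMod p) = ((1 : (ZMod p)ˣ) : ZMod p) := by rw [h]
    simpa [hu] using this
  have hord : orderOf u ∣ 3 := orderOf_dvd_of_pow_eq_one hu3
  have hord1 : orderOf u ≠ 1 := by
    intro h
    exact hne (orderOf_eq_one_iff.mp h)
  have h3' : orderOf u = 3 := by
    rcases (Nat.Prime.eq_one_or_self_of_dvd (by norm_num) _ hord) with h | h
    · exact absurd h hord1
    · exact h
  have hcard : orderOf u ∣ Fintype.card (ZMod p)ˣ := orderOf_dvd_card
  rw [h3', ZMod.card_units] at hcard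
  omega

/-- If `p % 3 = 1` there is a nontrivial cube root of unity. -/
private lemma s19_omega_exists (hp3 : 3 < p) (h : p % 3 = 1) :
    ∃ ω : ZMod p, ω ≠ 1 ∧ ω ^ 3 = 1 := by
  have hdvd : 3 ∣ Fintype.card (ZMod p)ˣ := by
    rw [ZMod.card_units]; omega
  obtain ⟨u, hu⟩ := exists_prime_orderOf_dvd_card 3 hdvd
  refine ⟨(u : ZMod p), ?_, ?_⟩
  · intro h1
    have : u = 1 := Units.ext h1
    rw [this] at hu; simp at hu
  · have : u ^ 3 = 1 := by rw [← hu]; exact pow_orderOf_eq_one u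
    have := congrArg (Units.val) this
    push_cast at this
    exact this

/-- When `p % 3 = 2`, cubing is injective. -/
private lemma s19_cube_inj (hp3 : 3 < p) (h : p % 3 = 2) :
    Function.Injective (fun x : ZMod p => x ^ 3) := by
  intro x y hxy
  simp only at hxy
  by_cases hy : y = 0
  · subst hy
    simpa using pow_eq_zero_iff (n := 3) (by norm_num) |>.mp (by simpa using hxy)
  · have hq : (x * y⁻¹) ^ 3 = 1 := by
      rw [mul_pow, hxy, inv_pow, mul_inv_cancel₀ (pow_ne_zero 3 hy)]
    by_contra hne
    have h1 : x * y⁻¹ ≠ 1 := by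
      intro h1
      apply hne
      field_simp at h1
      exact h1
    have := s19_omega_imp hp3 h1 hq
    omega

end S19b
section S19c

variable {p : ℕ} [hp : Fact p.Prime]

private lemma s19_omega_rel {ω : ZMod p} (h1 : ω ≠ 1) (h3 : ω ^ 3 = 1) :
    ω ^ 2 + ω + 1 = 0 := by
  have : (ω - 1) * (ω ^ 2 + ω + 1) = 0 := by linear_combination h3
  rcases mul_eq_zero.mp this with h | h
  · exact absurd (sub_eq_zero.mp h) h1
  · exact h

private lemma s19_chi_neg_three_one (hp3 : 3 < p) (h : p % 3 = 1) :
    quadraticChar (ZMod p) (-3) = 1 := by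
  obtain ⟨ω, h1, h3⟩ := s19_omega_exists hp3 h
  have hrel := s19_omega_rel h1 h3
  have hsq : (2 * ω + 1) ^ 2 = -3 := by linear_combination 4 * hrel
  have hne : (-3 : ZMod p) ≠ 0 := fun hh => s19_three_ne hp3 (neg_eq_zero.mp hh)
  rw [quadraticChar_one_iff_isSquare hne]
  exact ⟨2 * ω + 1, by rw [← hsq]; ring⟩

private lemma s19_chi_neg_three_neg (hp3 : 3 < p) (h : p % 3 = 2) :
    quadraticChar (ZMod p) (-3) = -1 := by
  have hne : (-3 : ZMod p) ≠ 0 := fun hh => s19_three_ne hp3 (neg_eq_zero.mp hh)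
  rcases quadraticChar_dichotomy hne with h1 | h1
  · exfalso
    obtain ⟨s, hs⟩ := (quadraticChar_one_iff_isSquare hne).mp h1
    have hs' : s * s = -3 := hs.symm
    set ω : ZMod p := (s - 1) * (2 : ZMod p)⁻¹ with hω
    have h2 : (2 : ZMod p) ≠ 0 := s19_two_ne hp3
    have h2i : (2 : ZMod p) * (2:ZMod p)⁻¹ = 1 := mul_inv_cancel₀ h2
    have hrel : ω ^ 2 + ω + 1 = 0 := by
      have : (2:ZMod p)^2 * (ω ^ 2 + ω + 1) = s * s + 3 := by
        rw [hω]; field_simp; ring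
      have h0 : (2:ZMod p)^2 * (ω ^ 2 + ω + 1) = 0 := by rw [this, hs']; ring
      rcases mul_eq_zero.mp h0 with hh | hh
      · exact absurd hh (pow_ne_zero 2 h2)
      · exact hh
    have h3' : ω ^ 3 = 1 := by linear_combination (ω - 1) * hrel
    have h1' : ω ≠ 1 := by
      intro hh
      rw [hh] at hrel
      have : (3 : ZMod p) = 0 := by linear_combination hrel
      exact s19_three_ne hp3 this
    have := s19_omega_imp hp3 h1' h3'
    omega
  · exact h1

private lemma s19_chi_inv {c : ZMod p} (hc : c ≠ 0) :
    quadraticChar (ZMod p) c⁻¹ = quadraticChar (ZMod p) c := by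
  have : c⁻¹ = c * (c⁻¹) ^ 2 := by field_simp
  rw [this, map_mul, quadraticChar_sq_one' (inv_ne_zero hc), mul_one]

end S19c
section S19d

variable {p : ℕ} [hp : Fact p.Prime]

private lemma s19_cube_count_one (hp3 : 3 < p) (h : p % 3 = 1) {c : ZMod p} (hc : c ≠ 0) :
    ((univ.filter (fun X : ZMod p => X ^ 3 = c)).card : ℤ)
      = if ∃ u : ZMod p, u ^ 3 = c then 3 else 0 := by
  by_cases hex : ∃ u : ZMod p, u ^ 3 = c
  · obtain ⟨u, hu⟩ := hex
    have hu0 : u ≠ 0 := fun h0 => hc (by rw [← hu, h0]; ring)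
    obtain ⟨ω, h1, h3⟩ := s19_omega_exists hp3 h
    have hrel := s19_omega_rel h1 h3
    have hω0 : ω ≠ 0 := fun h0 => by rw [h0] at h3; simp at h3
    have hωsq : ω ^ 2 ≠ 1 := by
      intro hh
      apply h1
      have hthis : ω ^ 3 = ω := by
        calc ω ^ 3 = ω * ω ^ 2 := by ring
        _ = ω := by rw [hh, mul_one]
      exact hthis.symm.trans h3
    have hfe : univ.filter (fun X : ZMod p => X ^ 3 = c) = {u, ω * u, ω ^ 2 * u} := by
      ext X
      simp only [mem_filter, mem_univ, true_and, mem_insert, mem_singleton]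
      constructor
      · intro hX
        have h0 : (X - u) * (X - ω * u) * (X - ω ^ 2 * u) = 0 := by
          linear_combination hX - hu + (ω * u ^ 2 * X - u * X ^ 2) * hrel
            - u ^ 3 * h3
        rcases mul_eq_zero.mp h0 with h0 | h0
        · rcases mul_eq_zero.mp h0 with h0 | h0
          · exact Or.inl (sub_eq_zero.mp h0)
          · exact Or.inr (Or.inl (sub_eq_zero.mp h0))
        · exact Or.inr (Or.inr (sub_eq_zero.mp h0))
      · rintro (rfl | rfl | rfl)
        · exact hu
        · rw [mul_pow, h3, one_mul]; exact hu
        · rw [mul_pow, ← pow_mul]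
          have : ω ^ (2 * 3) = 1 := by rw [mul_comm, pow_mul, h3, one_pow]
          rw [this, one_mul]; exact hu
    have hd1 : u ≠ ω * u := by
      intro hh
      apply h1
      have : (1 : ZMod p) * u = ω * u := by rw [one_mul]; exact hh
      exact (mul_right_cancel₀ hu0 this).symm
    have hd2 : u ≠ ω ^ 2 * u := by
      intro hh
      apply hωsq
      have : (1 : ZMod p) * u = ω ^ 2 * u := by rw [one_mul]; exact hh
      exact (mul_right_cancel₀ hu0 this).symm
    have hd3 : ω * u ≠ ω ^ 2 * u := by
      intro hh
      have hcan : ω = ω ^ 2 := mul_right_cancel₀ hu0 hh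
      apply h1
      have h' : ω * 1 = ω * ω := by rw [mul_one, ← pow_two]; exact hcan
      exact (mul_left_cancel₀ hω0 h').symm
    rw [hfe, if_pos ⟨u, hu⟩]
    rw [card_insert_of_notMem (by simp [hd1, hd2]), card_insert_of_notMem (by simp [hd3]),
      card_singleton]
    norm_num
  · rw [if_neg hex]
    have : univ.filter (fun X : ZMod p => X ^ 3 = c) = ∅ := by
      rw [filter_eq_empty_iff]
      intro X _ hX
      exact hex ⟨X, hX⟩
    rw [this, card_empty]
    norm_num

private lemma s19_cube_count_two (hp3 : 3 < p) (h : p % 3 = 2) (c : ZMod p) :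
    (∃ u : ZMod p, u ^ 3 = c) ∧
      ((univ.filter (fun X : ZMod p => X ^ 3 = c)).card : ℤ) = 1 := by
  have hinj := s19_cube_inj hp3 h
  have hsurj : Function.Surjective (fun x : ZMod p => x ^ 3) :=
    Finite.surjective_of_injective hinj
  obtain ⟨u, hu⟩ := hsurj c
  have hu' : u ^ 3 = c := hu
  refine ⟨⟨u, hu'⟩, ?_⟩
  have : univ.filter (fun X : ZMod p => X ^ 3 = c) = {u} := by
    ext X
    simp only [mem_filter, mem_univ, true_and, mem_singleton]
    constructor
    · intro hX
      exact hinj (show X ^ 3 = u ^ 3 by rw [hX, hu'])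
    · rintro rfl; exact hu'
  rw [this, card_singleton]
  norm_num

end S19d
section S19e

variable {p : ℕ} [hp : Fact p.Prime]

private lemma s19_chi_transfer (hp3 : 3 < p) {A X B : ZMod p} (hA : A ≠ 0) (hX : X ≠ 0)
    (heq : X ^ 3 + A = B * X) :
    (quadraticChar (ZMod p) (4 * B ^ 3 - 27 * A ^ 2) = -1) ↔
      (quadraticChar (ZMod p) (X ^ 4 + 4 * A * X) = -1) := by
  have key : X ^ 4 * (4 * B ^ 3 - 27 * A ^ 2) = (X ^ 4 + 4 * A * X) * (2 * X ^ 3 - A) ^ 2 := by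
    linear_combination (-(4 * X) * ((B * X) ^ 2 + B * X * (X ^ 3 + A) + (X ^ 3 + A) ^ 2)) * heq
  have hX4 : quadraticChar (ZMod p) (X ^ 4) = 1 := by
    have : X ^ 4 = (X ^ 2) ^ 2 := by ring
    rw [this]
    exact quadraticChar_sq_one' (pow_ne_zero 2 hX)
  have hmul : quadraticChar (ZMod p) (4 * B ^ 3 - 27 * A ^ 2)
      = quadraticChar (ZMod p) (X ^ 4 + 4 * A * X) * quadraticChar (ZMod p) ((2 * X ^ 3 - A) ^ 2) := by
    have := congrArg (quadraticChar (ZMod p)) key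
    rw [map_mul, map_mul, hX4, one_mul] at this
    exact this
  by_cases h2 : 2 * X ^ 3 - A = 0
  · have hA2 : A = 2 * X ^ 3 := by linear_combination -h2
    constructor
    · intro hD
      exfalso
      have h0 : ((2 * X ^ 3 - A) ^ 2) = 0 := by rw [h2]; ring
      rw [h0, quadraticChar_zero, mul_zero] at hmul
      rw [hmul] at hD
      norm_num at hD
    · intro hR
      exfalso
      have h9 : X ^ 4 + 4 * A * X = (3 * X ^ 2) ^ 2 := by rw [hA2]; ring
      rw [h9, quadraticChar_sq_one' (mul_ne_zero (s19_three_ne hp3) (pow_ne_zero 2 hX))] at hR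
      norm_num at hR
  · rw [hmul, quadraticChar_sq_one' h2, mul_one]

private lemma s19_card_eq (hp3 : 3 < p) {A : ZMod p} (hA : A ≠ 0) :
    (univ.filter (fun B : ZMod p => quadraticChar (ZMod p) (4 * B ^ 3 - 27 * A ^ 2) = -1 ∧
        ∃ X : ZMod p, X ≠ 0 ∧ X ^ 3 + A = B * X)).card
      = (univ.filter (fun X : ZMod p =>
          X ≠ 0 ∧ quadraticChar (ZMod p) (X ^ 4 + 4 * A * X) = -1)).card := by
  symm
  apply card_bij (fun X _ => (X ^ 3 + A) * X⁻¹)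
  · intro X hX
    simp only [mem_filter, mem_univ, true_and] at hX ⊢
    obtain ⟨hX0, hXχ⟩ := hX
    have heq : X ^ 3 + A = ((X ^ 3 + A) * X⁻¹) * X := by
      field_simp
    refine ⟨?_, X, hX0, heq⟩
    exact (s19_chi_transfer hp3 hA hX0 heq).mpr hXχ
  · intro X hX Y hY hBeq
    simp only [mem_filter, mem_univ, true_and] at hX hY
    obtain ⟨hX0, hXχ⟩ := hX
    obtain ⟨hY0, hYχ⟩ := hY
    have heqX : X ^ 3 + A = ((X ^ 3 + A) * X⁻¹) * X := by field_simp
    have heqY : Y ^ 3 + A = ((X ^ 3 + A) * X⁻¹) * Y := by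
      rw [hBeq]; field_simp
    generalize hBdef : (X ^ 3 + A) * X⁻¹ = B at heqX heqY
    have hχD : quadraticChar (ZMod p) (4 * B ^ 3 - 27 * A ^ 2) = -1 :=
      (s19_chi_transfer hp3 hA hX0 heqX).mpr hXχ
    by_contra hne
    have hXY : X - Y ≠ 0 := sub_ne_zero.mpr hne
    have hfac : (X - Y) * (X ^ 2 + X * Y + Y ^ 2 - B) = 0 := by
      linear_combination heqX - heqY
    have hB : X ^ 2 + X * Y + Y ^ 2 = B := by
      rcases mul_eq_zero.mp hfac with h | h
      · exact absurd h hXY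
      · linear_combination h
    have hsq : (2 * Y + X) ^ 2 = 4 * B - 3 * X ^ 2 := by linear_combination 4 * hB
    have k1 : X ^ 4 + 4 * A * X = X ^ 2 * (4 * B - 3 * X ^ 2) := by
      linear_combination (4 * X) * heqX
    have key : X ^ 4 * (4 * B ^ 3 - 27 * A ^ 2)
        = (X ^ 4 + 4 * A * X) * (2 * X ^ 3 - A) ^ 2 := by
      linear_combination (-(4 * X) * ((B * X) ^ 2 + B * X * (X ^ 3 + A) + (X ^ 3 + A) ^ 2)) * heqX
    have k4 : X ^ 2 * (X ^ 2 * (4 * B ^ 3 - 27 * A ^ 2))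
        = X ^ 2 * ((4 * B - 3 * X ^ 2) * (2 * X ^ 3 - A) ^ 2) := by
      linear_combination key + (2 * X ^ 3 - A) ^ 2 * k1
    have key2 : X ^ 2 * (4 * B ^ 3 - 27 * A ^ 2) = (4 * B - 3 * X ^ 2) * (2 * X ^ 3 - A) ^ 2 :=
      mul_left_cancel₀ (pow_ne_zero 2 hX0) k4
    have h2 : 2 * X ^ 3 - A ≠ 0 := by
      intro hh
      have h0 : X ^ 2 * (4 * B ^ 3 - 27 * A ^ 2) = 0 := by rw [key2, hh]; ring
      rcases mul_eq_zero.mp h0 with h | h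
      · exact pow_ne_zero 2 hX0 h
      · rw [h, quadraticChar_zero] at hχD; norm_num at hχD
    have hmul2 : quadraticChar (ZMod p) (X ^ 2) * quadraticChar (ZMod p) (4 * B ^ 3 - 27 * A ^ 2)
        = quadraticChar (ZMod p) (4 * B - 3 * X ^ 2)
          * quadraticChar (ZMod p) ((2 * X ^ 3 - A) ^ 2) := by
      rw [← map_mul, ← map_mul, key2]
    rw [quadraticChar_sq_one' hX0, one_mul, quadraticChar_sq_one' h2, mul_one, hχD] at hmul2
    rw [← hsq] at hmul2
    by_cases hz : 2 * Y + X = 0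
    · rw [hz] at hmul2
      simp at hmul2
    · rw [quadraticChar_sq_one' hz] at hmul2
      norm_num at hmul2
  · intro B hB
    simp only [mem_filter, mem_univ, true_and] at hB
    obtain ⟨hχD, X, hX0, heq⟩ := hB
    refine ⟨X, ?_, ?_⟩
    · simp only [mem_filter, mem_univ, true_and]
      exact ⟨hX0, (s19_chi_transfer hp3 hA hX0 heq).mp hχD⟩
    · rw [heq, mul_assoc, mul_inv_cancel₀ hX0, mul_one]

end S19e
section S19f

variable {p : ℕ} [hp : Fact p.Prime]

private lemma s19_one_sub (c : ZMod p) :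
    (1 : ℤ) - quadraticChar (ZMod p) c
      = (if quadraticChar (ZMod p) c = -1 then 2 else 0) + (if c = 0 then 1 else 0) := by
  by_cases h0 : c = 0
  · rw [h0, quadraticChar_zero, if_neg (by norm_num), if_pos rfl]; ring
  · rw [if_neg h0]
    rcases quadraticChar_dichotomy h0 with h | h <;> rw [h] <;> norm_num

private lemma s19_count (hp3 : 3 < p) {A : ZMod p} (hA : A ≠ 0) :
    2 * ((univ.filter (fun X : ZMod p =>
        X ≠ 0 ∧ quadraticChar (ZMod p) (X ^ 4 + 4 * A * X) = -1)).card : ℤ)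
      = (p : ℤ) - 1 - ((univ.filter (fun X : ZMod p => X ^ 3 = -(4 * A))).card : ℤ)
        - ∑ X : ZMod p, quadraticChar (ZMod p) (X ^ 4 + 4 * A * X) := by
  classical
  set s : Finset (ZMod p) := univ.filter (fun X => X ≠ 0) with hs
  have hcard_s : (s.card : ℤ) = (p : ℤ) - 1 := by
    rw [hs, filter_ne', card_erase_of_mem (mem_univ 0), card_univ, ZMod.card]
    have hp1 : 1 ≤ p := by omega
    rw [Nat.cast_sub hp1]
    norm_num
  have hsumext : ∑ X ∈ s, quadraticChar (ZMod p) (X ^ 4 + 4 * A * X)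
      = ∑ X : ZMod p, quadraticChar (ZMod p) (X ^ 4 + 4 * A * X) := by
    apply sum_subset (subset_univ s)
    intro x _ hx
    have hx0 : x = 0 := by
      by_contra hh
      exact hx (by simp [hs, hh])
    rw [hx0, show (0 : ZMod p) ^ 4 + 4 * A * 0 = 0 by ring, quadraticChar_zero]
  have E1 : ∑ X ∈ s, ((1 : ℤ) - quadraticChar (ZMod p) (X ^ 4 + 4 * A * X))
      = (p : ℤ) - 1 - ∑ X : ZMod p, quadraticChar (ZMod p) (X ^ 4 + 4 * A * X) := by
    rw [sum_sub_distrib, sum_const, nsmul_eq_mul, mul_one, hcard_s, hsumext]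
  have E2 : ∑ X ∈ s, ((1 : ℤ) - quadraticChar (ZMod p) (X ^ 4 + 4 * A * X))
      = 2 * ((s.filter (fun X => quadraticChar (ZMod p) (X ^ 4 + 4 * A * X) = -1)).card : ℤ)
        + ((s.filter (fun X => X ^ 4 + 4 * A * X = 0)).card : ℤ) := by
    rw [Finset.sum_congr rfl (fun X _ => s19_one_sub (X ^ 4 + 4 * A * X)), sum_add_distrib]
    congr 1
    · rw [← Finset.sum_filter, sum_const, nsmul_eq_mul]
      ring
    · rw [← Finset.sum_filter, sum_const, nsmul_eq_mul]
      ring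
  have hset1 : s.filter (fun X => quadraticChar (ZMod p) (X ^ 4 + 4 * A * X) = -1)
      = univ.filter (fun X : ZMod p =>
          X ≠ 0 ∧ quadraticChar (ZMod p) (X ^ 4 + 4 * A * X) = -1) := by
    rw [hs, filter_filter]
  have hset2 : s.filter (fun X => X ^ 4 + 4 * A * X = 0)
      = univ.filter (fun X : ZMod p => X ^ 3 = -(4 * A)) := by
    rw [hs, filter_filter]
    apply filter_congr
    intro X _
    constructor
    · rintro ⟨hX0, hf⟩
      have hz : X * (X ^ 3 + 4 * A) = 0 := by linear_combination hf
      rcases mul_eq_zero.mp hz with h | h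
      · exact absurd h hX0
      · linear_combination h
    · intro h3
      have hX0 : X ≠ 0 := by
        intro hh
        rw [hh] at h3
        have h4A : (4 : ZMod p) * A = 0 := by linear_combination h3
        rcases mul_eq_zero.mp h4A with h | h
        · exact s19_four_ne hp3 h
        · exact hA h
      exact ⟨hX0, by linear_combination X * h3⟩
  rw [hset1] at E2
  rw [hset2] at E2
  rw [E2] at E1
  linarith

private lemma s19_T (hp3 : 3 < p) {A : ZMod p} (hA : A ≠ 0) :
    ∑ X : ZMod p, quadraticChar (ZMod p) (X ^ 4 + 4 * A * X)
      = quadraticChar (ZMod p) 2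
          * (∑ Y : ZMod p, quadraticChar (ZMod p) (Y ^ 3 + 2 * A ^ 2)) - 1 := by
  classical
  have h2 : (2 : ZMod p) ≠ 0 := s19_two_ne hp3
  have h2A : (2 : ZMod p) * A ≠ 0 := mul_ne_zero h2 hA
  have h2A2 : (2 : ZMod p) * A ^ 2 ≠ 0 := mul_ne_zero h2 (pow_ne_zero 2 hA)
  set s : Finset (ZMod p) := univ.filter (fun X => X ≠ 0) with hs
  have hmem : ∀ {x : ZMod p}, x ∈ s ↔ x ≠ 0 := by
    intro x; rw [hs, mem_filter]; simp
  -- step 1: restrict to s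
  have step1 : ∑ X : ZMod p, quadraticChar (ZMod p) (X ^ 4 + 4 * A * X)
      = ∑ X ∈ s, quadraticChar (ZMod p) (X ^ 4 + 4 * A * X) := by
    symm
    apply sum_subset (subset_univ s)
    intro x _ hx
    have hx0 : x = 0 := by
      by_contra hh
      exact hx (hmem.mpr hh)
    rw [hx0, show (0 : ZMod p) ^ 4 + 4 * A * 0 = 0 by ring, quadraticChar_zero]
  -- step 2: invert
  have step2 : ∑ X ∈ s, quadraticChar (ZMod p) (X ^ 4 + 4 * A * X)
      = ∑ Z ∈ s, quadraticChar (ZMod p) (4 * A * Z ^ 3 + 1) := by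
    apply sum_nbij' (fun X => X⁻¹) (fun Z => Z⁻¹)
    · intro X hX
      exact hmem.mpr (inv_ne_zero (hmem.mp hX))
    · intro Z hZ
      exact hmem.mpr (inv_ne_zero (hmem.mp hZ))
    · intro X hX
      exact inv_inv X
    · intro Z hZ
      exact inv_inv Z
    · intro X hX
      have hX0 : X ≠ 0 := hmem.mp hX
      have harg : X ^ 4 + 4 * A * X = X ^ 4 * (4 * A * (X⁻¹) ^ 3 + 1) := by
        field_simp
        ring
      rw [harg, map_mul, show X ^ 4 = (X ^ 2) ^ 2 by ring,
        quadraticChar_sq_one' (pow_ne_zero 2 hX0), one_mul]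
  -- step 3: add back 0
  have step3 : ∑ Z ∈ s, quadraticChar (ZMod p) (4 * A * Z ^ 3 + 1)
      = (∑ Z : ZMod p, quadraticChar (ZMod p) (4 * A * Z ^ 3 + 1)) - 1 := by
    have huniv : ∑ Z : ZMod p, quadraticChar (ZMod p) (4 * A * Z ^ 3 + 1)
        = ∑ Z ∈ s, quadraticChar (ZMod p) (4 * A * Z ^ 3 + 1)
          + quadraticChar (ZMod p) (4 * A * 0 ^ 3 + 1) := by
      rw [hs, filter_ne']
      exact (Finset.sum_erase_add univ _ (mem_univ 0)).symm
    rw [huniv, show (4 : ZMod p) * A * 0 ^ 3 + 1 = 1 by ring, map_one]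
    ring
  -- step 4: rescale
  have step4 : ∑ Z : ZMod p, quadraticChar (ZMod p) (4 * A * Z ^ 3 + 1)
      = quadraticChar (ZMod p) 2
          * ∑ Y : ZMod p, quadraticChar (ZMod p) (Y ^ 3 + 2 * A ^ 2) := by
    rw [Finset.mul_sum]
    refine (Fintype.sum_bijective _ (Equiv.mulLeft₀ ((2 * A)⁻¹) (inv_ne_zero h2A)).bijective
      (fun Y => quadraticChar (ZMod p) 2 * quadraticChar (ZMod p) (Y ^ 3 + 2 * A ^ 2))
      (fun Z => quadraticChar (ZMod p) (4 * A * Z ^ 3 + 1)) fun Y => ?_).symm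
    show quadraticChar (ZMod p) 2 * quadraticChar (ZMod p) (Y ^ 3 + 2 * A ^ 2)
      = quadraticChar (ZMod p) (4 * A * ((2 * A)⁻¹ * Y) ^ 3 + 1)
    have harg : 4 * A * ((2 * A)⁻¹ * Y) ^ 3 + 1 = (2 * A ^ 2)⁻¹ * (Y ^ 3 + 2 * A ^ 2) := by
      field_simp
      ring
    rw [harg, map_mul, s19_chi_inv h2A2, map_mul, quadraticChar_sq_one' hA]
    ring
  rw [step1, step2, step3, step4]

end S19f
section S19g

variable {p : ℕ} [hp : Fact p.Prime]

private lemma s19_leg3_one (hp3 : 3 < p) (h : p % 3 = 1) : legendreSym 3 p = 1 := by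
  have : ((p : ℤ) : ZMod 3) = 1 := by
    have h1 : ((p % 3 : ℕ) : ZMod 3) = (p : ZMod 3) := ZMod.natCast_mod p 3
    rw [h] at h1
    push_cast at h1 ⊢
    rw [← h1]
  rw [legendreSym, this, map_one]

private lemma s19_leg3_two (hp3 : 3 < p) (h : p % 3 = 2) : legendreSym 3 p = -1 := by
  have hcast : ((p : ℤ) : ZMod 3) = 2 := by
    have h1 : ((p % 3 : ℕ) : ZMod 3) = (p : ZMod 3) := ZMod.natCast_mod p 3
    rw [h] at h1
    push_cast at h1 ⊢
    rw [← h1]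
  rw [legendreSym, hcast]
  decide

private lemma s19_Sfull_zero (hp3 : 3 < p) (h : p % 3 = 2) (c : ZMod p) :
    ∑ Y : ZMod p, quadraticChar (ZMod p) (Y ^ 3 + c) = 0 := by
  have hinj3 := s19_cube_inj hp3 h
  have hinj : Function.Injective (fun Y : ZMod p => Y ^ 3 + c) := by
    intro x y hxy
    simp only [] at hxy
    exact hinj3 (by simpa using add_right_cancel hxy)
  have hbij : Function.Bijective (fun Y : ZMod p => Y ^ 3 + c) :=
    ⟨hinj, Finite.surjective_of_injective hinj⟩
  have := Fintype.sum_bijective (fun Y : ZMod p => Y ^ 3 + c) hbij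
    (fun Y => quadraticChar (ZMod p) (Y ^ 3 + c))
    (fun Z => quadraticChar (ZMod p) Z) (fun Y => rfl)
  rw [this]
  apply quadraticChar_sum_zero
  rw [ZMod.ringChar_zmod_n]
  omega

private lemma s19_cube_equiv (hp3 : 3 < p) {A : ZMod p} (hA : A ≠ 0) :
    (∃ u : ZMod p, u ^ 3 = -(4 * A)) ↔ (∃ u : ZMod p, u ^ 3 = 2 * A ^ 2) := by
  have h4A : -(4 * A) ≠ 0 := by
    intro hh
    rcases mul_eq_zero.mp (neg_eq_zero.mp hh) with h | h
    · exact s19_four_ne hp3 h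
    · exact hA h
  have h2A2 : (2 : ZMod p) * A ^ 2 ≠ 0 :=
    mul_ne_zero (s19_two_ne hp3) (pow_ne_zero 2 hA)
  constructor
  · rintro ⟨u, hu⟩
    have hu0 : u ≠ 0 := by
      intro hh
      rw [hh] at hu
      exact h4A (by rw [← hu]; ring)
    refine ⟨-(2 * A) * u⁻¹, ?_⟩
    have hvu : (-(2 * A) * u⁻¹) * u = -(2 * A) := by field_simp
    have h1 : (-(2 * A) * u⁻¹) ^ 3 * u ^ 3 = (2 * A ^ 2) * u ^ 3 := by
      have hcube : ((-(2 * A) * u⁻¹) * u) ^ 3 = -(8 * A ^ 3) := by rw [hvu]; ring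
      rw [mul_pow] at hcube
      rw [hcube, hu]
      ring
    exact mul_right_cancel₀ (pow_ne_zero 3 hu0) h1
  · rintro ⟨v, hv⟩
    have hv0 : v ≠ 0 := by
      intro hh
      rw [hh] at hv
      exact h2A2 (by rw [← hv]; ring)
    refine ⟨-(2 * A) * v⁻¹, ?_⟩
    have hvu : (-(2 * A) * v⁻¹) * v = -(2 * A) := by field_simp
    have h1 : (-(2 * A) * v⁻¹) ^ 3 * v ^ 3 = (-(4 * A)) * v ^ 3 := by
      have hcube : ((-(2 * A) * v⁻¹) * v) ^ 3 = -(8 * A ^ 3) := by rw [hvu]; ring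
      rw [mul_pow] at hcube
      rw [hcube, hv]
      ring
    exact mul_right_cancel₀ (pow_ne_zero 3 hv0) h1

private lemma s19_n_eq (hp3 : 3 < p) {A : ZMod p} (hA : A ≠ 0) :
    ((univ.filter (fun X : ZMod p => X ^ 3 = -(4 * A))).card : ℤ)
      = (2 + legendreSym 3 p) * (if ∃ u : ZMod p, u ^ 3 = 2 * A ^ 2 then (1 : ℤ) else 0) := by
  have h4A : -(4 * A) ≠ 0 := by
    intro hh
    rcases mul_eq_zero.mp (neg_eq_zero.mp hh) with h | h
    · exact s19_four_ne hp3 h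
    · exact hA h
  rcases s19_pmod3 hp3 with h | h
  · rw [s19_cube_count_one hp3 h h4A, s19_leg3_one hp3 h,
      if_congr (s19_cube_equiv hp3 hA) rfl rfl]
    split_ifs <;> norm_num
  · obtain ⟨hex, hcard⟩ := s19_cube_count_two hp3 h (-(4 * A))
    obtain ⟨hex2, _⟩ := s19_cube_count_two hp3 h (2 * A ^ 2)
    rw [hcard, s19_leg3_two hp3 h, if_pos hex2]
    norm_num

end S19g
section S19h

variable {p : ℕ} [hp : Fact p.Prime]

private lemma s19_leg_neg6 (hp3 : 3 < p) :
    legendreSym p (-6) = legendreSym 3 p * quadraticChar (ZMod p) 2 := by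
  have hcast : ((-6 : ℤ) : ZMod p) = (-3 : ZMod p) * 2 := by push_cast; ring
  rw [legendreSym, hcast, map_mul]
  congr 1
  rcases s19_pmod3 hp3 with h | h
  · rw [s19_chi_neg_three_one hp3 h, s19_leg3_one hp3 h]
  · rw [s19_chi_neg_three_neg hp3 h, s19_leg3_two hp3 h]

private lemma s19_cast_ne_zero (hp3 : 3 < p) {x : ℕ} (h1 : 1 ≤ x) (h2 : x ≤ p - 1) :
    ((x : ℕ) : ZMod p) ≠ 0 := by
  exact s19_nat_ne hp3 (by omega) (by omega)

private lemma s19_exists_iff (hp3 : 3 < p) (a : ℤ) (b : ℕ) :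
    (∃ x ∈ Finset.Icc 1 (p - 1),
        (x : ℤ) ^ 3 + a ≡ (b : ℤ) * (x : ℤ) [ZMOD (p : ℤ)])
      ↔ (∃ X : ZMod p, X ≠ 0 ∧ X ^ 3 + ((a : ℤ) : ZMod p) = (b : ZMod p) * X) := by
  constructor
  · rintro ⟨x, hx, hcong⟩
    rw [mem_Icc] at hx
    refine ⟨(x : ZMod p), s19_cast_ne_zero hp3 hx.1 hx.2, ?_⟩
    have := (ZMod.intCast_eq_intCast_iff _ _ _).mpr hcong
    push_cast at this
    exact this
  · rintro ⟨X, hX0, heq⟩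
    refine ⟨X.val, ?_, ?_⟩
    · rw [mem_Icc]
      have hlt := ZMod.val_lt X
      have hne : X.val ≠ 0 := fun hh => hX0 ((ZMod.val_eq_zero X).mp hh)
      omega
    · rw [← ZMod.intCast_eq_intCast_iff]
      push_cast
      rw [ZMod.natCast_rightInverse X]
      exact heq

private lemma s19_leg_eq (a : ℤ) (b : ℕ) :
    legendreSym p (4 * (b : ℤ) ^ 3 - 27 * a ^ 2)
      = quadraticChar (ZMod p)
          (4 * ((b : ℕ) : ZMod p) ^ 3 - 27 * ((a : ℤ) : ZMod p) ^ 2) := by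
  rw [legendreSym]
  congr 1
  push_cast
  ring

private lemma s19_card_conv (hp3 : 3 < p) (a : ℤ) :
    (((Finset.range p).filter (fun b : ℕ =>
        legendreSym p (4 * (b : ℤ) ^ 3 - 27 * a ^ 2) = -1 ∧
        ∃ x ∈ Finset.Icc 1 (p - 1),
          (x : ℤ) ^ 3 + a ≡ (b : ℤ) * (x : ℤ) [ZMOD (p : ℤ)])).card)
      = (univ.filter (fun B : ZMod p =>
          quadraticChar (ZMod p) (4 * B ^ 3 - 27 * ((a : ℤ) : ZMod p) ^ 2) = -1 ∧
          ∃ X : ZMod p, X ≠ 0 ∧ X ^ 3 + ((a : ℤ) : ZMod p) = B * X)).card := by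
  classical
  refine card_bij (fun b _ => (b : ZMod p)) ?_ ?_ ?_
  · intro b hb
    simp only [mem_filter, mem_range] at hb ⊢
    obtain ⟨hblt, hleg, hex⟩ := hb
    refine ⟨mem_univ _, ?_, ?_⟩
    · rw [← s19_leg_eq a b]
      exact hleg
    · exact (s19_exists_iff hp3 a b).mp hex
  · intro b1 hb1 b2 hb2 heq
    simp only [mem_filter, mem_range] at hb1 hb2
    have := congrArg ZMod.val heq
    rwa [ZMod.val_cast_of_lt hb1.1, ZMod.val_cast_of_lt hb2.1] at this
  · intro B hB
    simp only [mem_filter, mem_univ, true_and] at hB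
    refine ⟨B.val, ?_, ZMod.natCast_rightInverse B⟩
    simp only [mem_filter, mem_range]
    refine ⟨ZMod.val_lt B, ?_, ?_⟩
    · rw [s19_leg_eq a B.val, ZMod.natCast_rightInverse B]
      exact hB.1
    · rw [s19_exists_iff hp3 a B.val]
      rw [ZMod.natCast_rightInverse B]
      exact hB.2

private lemma s19_sum_conv (hp3 : 3 < p) (a : ℤ) (hA : ((a : ℤ) : ZMod p) ≠ 0) :
    (∑ y ∈ Finset.Icc 1 (p - 1), legendreSym p ((y : ℤ) ^ 3 + 2 * a ^ 2))
      = (∑ Y : ZMod p,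
          quadraticChar (ZMod p) (Y ^ 3 + 2 * ((a : ℤ) : ZMod p) ^ 2))
        - quadraticChar (ZMod p) 2 := by
  classical
  set A : ZMod p := ((a : ℤ) : ZMod p) with hAdef
  have step1 : (∑ y ∈ Finset.Icc 1 (p - 1), legendreSym p ((y : ℤ) ^ 3 + 2 * a ^ 2))
      = ∑ Y ∈ univ.filter (fun Y : ZMod p => Y ≠ 0),
          quadraticChar (ZMod p) (Y ^ 3 + 2 * A ^ 2) := by
    apply sum_nbij' (fun y : ℕ => (y : ZMod p)) (fun Y : ZMod p => Y.val)
    · intro y hy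
      rw [mem_Icc] at hy
      simp only [mem_filter, mem_univ, true_and]
      exact s19_cast_ne_zero hp3 hy.1 hy.2
    · intro Y hY
      simp only [mem_filter, mem_univ, true_and] at hY
      rw [mem_Icc]
      have hlt := ZMod.val_lt Y
      have hne : Y.val ≠ 0 := fun hh => hY ((ZMod.val_eq_zero Y).mp hh)
      omega
    · intro y hy
      rw [mem_Icc] at hy
      exact ZMod.val_cast_of_lt (by omega)
    · intro Y hY
      exact ZMod.natCast_rightInverse Y
    · intro y hy
      rw [legendreSym]
      congr 1
      push_cast
      ring
  have step2 : ∑ Y : ZMod p, quadraticChar (ZMod p) (Y ^ 3 + 2 * A ^ 2)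
      = (∑ Y ∈ univ.filter (fun Y : ZMod p => Y ≠ 0),
          quadraticChar (ZMod p) (Y ^ 3 + 2 * A ^ 2))
        + quadraticChar (ZMod p) (2 * A ^ 2) := by
    rw [filter_ne', ← Finset.sum_erase_add univ
      (fun Y : ZMod p => quadraticChar (ZMod p) (Y ^ 3 + 2 * A ^ 2)) (mem_univ (0 : ZMod p))]
    congr 1
    congr 1
    ring
  rw [step1, step2]
  rw [map_mul, quadraticChar_sq_one' hA]
  ring

private lemma s19_delta_conv (a : ℤ) :
    (∃ x ∈ Finset.range p, (x : ℤ) ^ 3 ≡ 2 * a ^ 2 [ZMOD (p : ℤ)])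
      ↔ (∃ u : ZMod p, u ^ 3 = 2 * ((a : ℤ) : ZMod p) ^ 2) := by
  constructor
  · rintro ⟨x, _, hcong⟩
    refine ⟨(x : ZMod p), ?_⟩
    have := (ZMod.intCast_eq_intCast_iff _ _ _).mpr hcong
    push_cast at this
    exact this
  · rintro ⟨u, hu⟩
    refine ⟨u.val, mem_range.mpr (ZMod.val_lt u), ?_⟩
    rw [← ZMod.intCast_eq_intCast_iff]
    push_cast
    rw [ZMod.natCast_rightInverse u]
    exact hu

end S19h
theorem stmt_19 (p : ℕ) [hp : Fact p.Prime] (hp3 : 3 < p)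
    (a : ℤ) (ha : ¬ (p : ℤ) ∣ a) :
    2 * ((((Finset.range p).filter (fun b : ℕ =>
        legendreSym p (4 * (b : ℤ) ^ 3 - 27 * a ^ 2) = -1 ∧
        ∃ x ∈ Finset.Icc 1 (p - 1),
          (x : ℤ) ^ 3 + a ≡ (b : ℤ) * (x : ℤ) [ZMOD (p : ℤ)])).card : ℤ))
      = (p : ℤ) - legendreSym 3 p - legendreSym p (-6) * (∑ y ∈ Finset.Icc 1 (p - 1), legendreSym p ((y : ℤ) ^ 3 + 2 * a ^ 2))
        - (2 + legendreSym 3 p) * (if ∃ x ∈ Finset.range p, (x : ℤ) ^ 3 ≡ 2 * a ^ 2 [ZMOD (p : ℤ)] then (1 : ℤ) else 0) := by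
  classical
  have hA : ((a : ℤ) : ZMod p) ≠ 0 := by
    rw [Ne, ZMod.intCast_zmod_eq_zero_iff_dvd]
    exact ha
  rw [s19_card_conv hp3 a, s19_card_eq hp3 hA, s19_count hp3 hA, s19_T hp3 hA,
    s19_n_eq hp3 hA, s19_sum_conv hp3 a hA, s19_leg_neg6 hp3]
  simp only [s19_delta_conv a]
  have hc2sq : quadraticChar (ZMod p) 2 ^ 2 = 1 := quadraticChar_sq_one (s19_two_ne hp3)
  rcases s19_pmod3 hp3 with h | h
  · rw [s19_leg3_one hp3 h]
    linear_combination -hc2sq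
  · rw [s19_leg3_two hp3 h, s19_Sfull_zero hp3 h (2 * ((a : ℤ) : ZMod p) ^ 2)]
    linear_combination hc2sq
end
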